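/- arXiv:1802.09324 — 11 statements merged into one kernel-verified Lean document; each statement's English description precedes it below -/
import Mathlib

section
/- Let r ≥ 1 and m ≥ 1 be integers and let S ⊆ A(r,m) be a pierced subset, i.e., the convex hull of S intersects the line ℝ·1_r. Then for every i ∈ {1,…,r}, S contains at least one point of color i. -/
/-- The point `a_{i,j,k}` of the construction `A(r,m)` (indices `i,j,k` are 1-based). -/
noncomputable def pt (r m i j k : ℕ) : Fin r → ℝ := fun l =>
  if (l : ℕ) + 1 = i then
    (∑ l' ∈ Finset.Icc (j + 1) r, (m : ℝ) ^ (2 * r - 2 * l' + 3))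
      + ((r - j : ℕ) : ℝ) * (m : ℝ) + (k : ℝ)
  else if j + 1 ≤ (l : ℕ) + 1 then
    -((m : ℝ) ^ (2 * r - 2 * ((l : ℕ) + 1) + 3))
  else 0

/-- The point set `A(r,m) ⊆ ℝ^r`. -/
def Apts (r m : ℕ) : Set (Fin r → ℝ) :=
  {x | ∃ i j k : ℕ, 1 ≤ i ∧ i ≤ j ∧ j ≤ r ∧ 1 ≤ k ∧ k ≤ m ∧ x = pt r m i j k}

/-- The set `C_i` of points of `A(r,m)` of color `i`. -/
def colorSet (r m i : ℕ) : Set (Fin r → ℝ) :=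
  {x | ∃ j k : ℕ, 1 ≤ i ∧ i ≤ j ∧ j ≤ r ∧ 1 ≤ k ∧ k ≤ m ∧ x = pt r m i j k}

/-- The set `L_j` of points of `A(r,m)` of layer `j`. -/
def layerSet (r m j : ℕ) : Set (Fin r → ℝ) :=
  {x | ∃ i k : ℕ, 1 ≤ i ∧ i ≤ j ∧ j ≤ r ∧ 1 ≤ k ∧ k ≤ m ∧ x = pt r m i j k}

/-- A set `S ⊆ ℝ^r` is pierced if its convex hull meets the line `ℝ·1_r`. -/
def Pierced {r : ℕ} (S : Set (Fin r → ℝ)) : Prop :=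
  ∃ c : ℝ, (fun _ => c : Fin r → ℝ) ∈ convexHull ℝ S

/-- The `i`-th standard basis vector of `ℝ^r` (1-based index). -/
def stdVec (r i : ℕ) : Fin r → ℝ := fun l => if (l : ℕ) + 1 = i then 1 else 0

/-!
Every point of `A(r,m)` has coordinate sum `(r - j)m + k ≥ 1`, since the large coordinate of
colour `i` exactly cancels the negative entries. If `S` had no point of colour `i`, then the
`i`-th coordinate would be `≤ 0` on all of `S`. Both are half-space conditions, so they pass to
`conv(S)`, and no point `c • 1` can satisfy `c ≤ 0` and `r c > 0` at once.
-/

theorem isLinearMap_sum_apply (ι : Type*) [Fintype ι] :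
    IsLinearMap ℝ (fun x : ι → ℝ => ∑ i, x i) :=
  ⟨fun _ _ => Finset.sum_add_distrib, fun _ _ => (Finset.mul_sum _ _ _).symm⟩

theorem const_notMem_convexHull {ι : Type*} [Fintype ι] {S : Set (ι → ℝ)} (l : ι)
    (h_coord : ∀ x ∈ S, x l ≤ 0) (h_sum : ∀ x ∈ S, 0 < ∑ i, x i) (c : ℝ) :
    (fun _ => c) ∉ convexHull ℝ S := by
  intro hc
  have hc_nonpos : c ≤ 0 :=
    convexHull_min h_coord (convex_halfSpace_le (LinearMap.proj l).isLinear 0) hc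
  have hc_sum_pos : 0 < ∑ _ : ι, c :=
    convexHull_min h_sum (convex_halfSpace_gt (isLinearMap_sum_apply ι) 0) hc
  rw [Finset.sum_const, Finset.card_univ, nsmul_eq_mul] at hc_sum_pos
  nlinarith [(Nat.cast_nonneg _ : (0 : ℝ) ≤ Fintype.card ι)]

theorem pt_apply_nonpos {r m i j k : ℕ} {l : Fin r} (hl : (l : ℕ) + 1 ≠ i) :
    pt r m i j k l ≤ 0 := by
  unfold pt
  rw [if_neg hl]
  split_ifs
  · exact neg_nonpos.2 (by positivity)
  · exact le_rfl

theorem Fin.sum_univ_eq_sum_Icc {M : Type*} [AddCommMonoid M] (r : ℕ) (f : ℕ → M) :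
    ∑ l : Fin r, f (l + 1) = ∑ n ∈ Finset.Icc 1 r, f n := by
  rw [Fin.sum_univ_eq_sum_range (fun l => f (l + 1)), Finset.range_eq_Ico, Finset.sum_Ico_add',
    Finset.Ico_add_one_right_eq_Icc]

theorem sum_pt {r m i j k : ℕ} (hi : 1 ≤ i) (hij : i ≤ j) (hjr : j ≤ r) :
    ∑ l : Fin r, pt r m i j k l = ((r - j : ℕ) : ℝ) * m + k := by
  set T := ∑ n ∈ Finset.Icc (j + 1) r, (m : ℝ) ^ (2 * r - 2 * n + 3)
  set A := T + ((r - j : ℕ) : ℝ) * m + k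
  -- the two branches of `pt` never both apply, as the colour `i` is at most the layer `j`
  have h_split (l : Fin r) : pt r m i j k l = (if (l : ℕ) = i - 1 then A else 0)
      - (if j + 1 ≤ (l : ℕ) + 1 then (m : ℝ) ^ (2 * r - 2 * ((l : ℕ) + 1) + 3) else 0) := by
    unfold pt
    split_ifs <;> first | omega | ring
  have h_head : ∑ l : Fin r, (if (l : ℕ) = i - 1 then A else 0) = A := by
    simpa [Fin.ext_iff] using Finset.sum_ite_eq' Finset.univ (⟨i - 1, by omega⟩ : Fin r) fun _ => A
  have h_tail : ∑ l : Fin r,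
      (if j + 1 ≤ (l : ℕ) + 1 then (m : ℝ) ^ (2 * r - 2 * ((l : ℕ) + 1) + 3) else 0) = T := by
    rw [Fin.sum_univ_eq_sum_Icc r fun n => if j + 1 ≤ n then (m : ℝ) ^ (2 * r - 2 * n + 3) else 0,
      ← Finset.sum_filter]
    congr 1
    ext n
    simp only [Finset.mem_filter, Finset.mem_Icc]
    omega
  simp_rw [h_split]
  rw [Finset.sum_sub_distrib, h_head, h_tail]
  ring

theorem pierced_subset_contains_all_colors_general
    (r m : ℕ)
    (S : Set (Fin r → ℝ)) (hSA : S ⊆ Apts r m) (hS : Pierced S) :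
    ∀ i : ℕ, 1 ≤ i → i ≤ r → ∃ x ∈ S, x ∈ colorSet r m i := by
  intro i hi hir
  by_contra! h_no_color
  obtain ⟨c, hc⟩ := hS
  refine const_notMem_convexHull ⟨i - 1, by omega⟩ (fun x hx => ?_) (fun x hx => ?_) c hc
  · obtain ⟨i', j, k, hi', hi'j, hjr, hk, hkm, rfl⟩ := hSA hx
    have hi'i : i' ≠ i := by
      rintro rfl
      exact h_no_color _ hx ⟨j, k, hi', hi'j, hjr, hk, hkm, rfl⟩
    exact pt_apply_nonpos (by dsimp only; omega)
  · obtain ⟨i', j, k, hi', hi'j, hjr, hk, -, rfl⟩ := hSA hx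
    rw [sum_pt hi' hi'j hjr]
    have hk_pos : (0 : ℝ) < k := by exact_mod_cast hk
    positivity

/-- every pierced subset of `A(r,m)` contains a point of each color. -/
theorem pierced_subset_contains_all_colors
    (r m : ℕ) (hr : 1 ≤ r) (hm : 1 ≤ m)
    (S : Set (Fin r → ℝ)) (hSA : S ⊆ Apts r m) (hS : Pierced S) :
    ∀ i : ℕ, 1 ≤ i → i ≤ r → ∃ x ∈ S, x ∈ colorSet r m i :=
  pierced_subset_contains_all_colors_general r m S hSA hS
end

section
/- Let r ≥ 1 and m ≥ 1 be integers and let S ⊆ A(r,m) be a subset containing at least one point of each color i ∈ {1,…,r}. Then S is pierced; moreover, for each i ∈ {1,…,r} there exists a real t > 0 such that t·e_i lies in the convex hull of S, where e_i denotes the i-th standard basis vector of ℝ^r. -/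
/-!
Pick one point of each color and let `M` be the matrix whose row `i` is the chosen point of
color `i + 1`. Since a point of color `i` vanishes before coordinate `i`, is positive at
coordinate `i` and nonpositive after it, `M` is an upper triangular Z-matrix with positive
diagonal. Back substitution along the rows then writes every nonnegative vector as a
nonnegative combination of the rows; normalising the coefficients puts a positive multiple
of `1_r`, and of each `e_i`, into the convex hull of `S`.
-/

open Matrix

/-- The triangular nonsingular M-matrices. -/
structure IsUpperTriangularMMatrix {ι : Type*} [LinearOrder ι] (M : Matrix ι ι ℝ) : Prop where
  isUpperTriangular : M.IsUpperTriangular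
  diag_pos : ∀ i, 0 < M i i
  nonpos_of_ne : ∀ ⦃i j⦄, i ≠ j → M i j ≤ 0

namespace IsUpperTriangularMMatrix

variable {ι : Type*} [LinearOrder ι] [Fintype ι] {M : Matrix ι ι ℝ}

theorem exists_nonneg_vecMul_eq (hM : IsUpperTriangularMMatrix M) {c : ι → ℝ} (hc : 0 ≤ c) :
    ∃ w, 0 ≤ w ∧ w ᵥ* M = c := by
  classical
  suffices key : ∀ s : Finset ι, IsUpperSet (s : Set ι) → ∀ c : ι → ℝ, 0 ≤ c →
      (∀ l ∉ s, c l = 0) → ∃ w, 0 ≤ w ∧ w ᵥ* M = c from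
    key Finset.univ (by simpa using isUpperSet_univ) c hc (by simp)
  intro s
  induction s using Finset.induction_on_min with
  | empty =>
    intro _ c _ hc0
    exact ⟨0, le_rfl, by ext l; simp [hc0 l (Finset.notMem_empty l)]⟩
  | insert a s has ih =>
    intro hup c hc hsupp
    -- eliminate coordinate `a` with row `a`; what remains is supported on `s`
    set t := c a / M a a
    have ht : 0 ≤ t := div_nonneg (hc a) (hM.diag_pos a).le
    have hres_a : (c - t • M a) a = 0 := by
      simp [t, div_mul_cancel₀ _ (hM.diag_pos a).ne']
    have hs_up : IsUpperSet (s : Set ι) := fun x y hxy hx => by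
      have hy : y ∈ insert a s := hup hxy (Finset.mem_insert_of_mem hx)
      exact (Finset.mem_insert.1 hy).resolve_left (has x hx |>.trans_le hxy).ne'
    have hres_nonneg : 0 ≤ c - t • M a := fun l => by
      rcases eq_or_ne a l with rfl | hal
      · exact hres_a.ge
      · have := mul_nonpos_of_nonneg_of_nonpos ht (hM.nonpos_of_ne hal)
        simp only [Pi.zero_apply, Pi.sub_apply, Pi.smul_apply, smul_eq_mul]
        linarith [show 0 ≤ c l from hc l]
    have hres_supp : ∀ l ∉ s, (c - t • M a) l = 0 := fun l hl => by
      rcases lt_trichotomy l a with hla | rfl | hal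
      · have hcl : c l = 0 := hsupp l (by simp [hl, hla.ne])
        simp [hcl, hM.isUpperTriangular hla]
      · exact hres_a
      · exact absurd (hup hal.le (Finset.mem_insert_self a s)) (by simp [hl, hal.ne'])
    obtain ⟨w, hw, hwc⟩ := ih hs_up _ hres_nonneg hres_supp
    refine ⟨w + Pi.single a t, add_nonneg hw (Pi.single_nonneg.2 ht), ?_⟩
    rw [add_vecMul, hwc, single_vecMul]
    exact sub_add_cancel c _

theorem exists_pos_smul_mem_convexHull (hM : IsUpperTriangularMMatrix M) {S : Set (ι → ℝ)}
    (hMS : ∀ i, M i ∈ S) {c : ι → ℝ} (hc : 0 ≤ c) (hc0 : c ≠ 0) :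
    ∃ t : ℝ, 0 < t ∧ t • c ∈ convexHull ℝ S := by
  obtain ⟨w, hw, rfl⟩ := hM.exists_nonneg_vecMul_eq hc
  obtain ⟨i, hi⟩ : ∃ i, w i ≠ 0 := by
    by_contra! h
    exact hc0 (by rw [show w = 0 from funext h, zero_vecMul])
  have hsum : 0 < ∑ i, w i :=
    Finset.sum_pos' (fun i _ => hw i) ⟨i, Finset.mem_univ i, (hw i).lt_of_ne' hi⟩
  refine ⟨(∑ i, w i)⁻¹, inv_pos.2 hsum, ?_⟩
  rw [vecMul_eq_sum]
  exact Finset.centerMass_mem_convexHull _ (fun i _ => hw i) hsum (fun i _ => hMS i)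

end IsUpperTriangularMMatrix

theorem pt_apply_self {r : ℕ} (m j k : ℕ) (l : Fin r) (hk : 1 ≤ k) :
    0 < pt r m ((l : ℕ) + 1) j k l := by
  have hk' : (0 : ℝ) < k := by exact_mod_cast hk
  simp only [pt, if_true]
  positivity

theorem pt_apply_eq_zero_of_lt {r : ℕ} (m : ℕ) {i j : ℕ} (k : ℕ) {l : Fin r} (hij : i ≤ j)
    (hl : (l : ℕ) + 1 < i) : pt r m i j k l = 0 := by
  simp only [pt, if_neg hl.ne, if_neg (show ¬ j + 1 ≤ (l : ℕ) + 1 by omega)]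

theorem pt_apply_nonpos_of_ne {r : ℕ} (m i j k : ℕ) {l : Fin r} (hl : (l : ℕ) + 1 ≠ i) :
    pt r m i j k l ≤ 0 := by
  simp only [pt, if_neg hl]
  split_ifs
  · exact neg_nonpos.2 (by positivity)
  · exact le_rfl

theorem exists_isUpperTriangularMMatrix_of_forall_colorSet {r m : ℕ} {S : Set (Fin r → ℝ)}
    (hcol : ∀ i : ℕ, 1 ≤ i → i ≤ r → ∃ x ∈ S, x ∈ colorSet r m i) :
    ∃ M : Matrix (Fin r) (Fin r) ℝ, (∀ i, M i ∈ S) ∧ IsUpperTriangularMMatrix M := by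
  simp only [colorSet, Set.mem_ofPred_eq] at hcol
  choose M hMS j k _ hij _ hk _ hM using fun i : Fin r => hcol (i + 1) (by omega) i.isLt
  refine ⟨M, hMS, ⟨fun i l hli => ?_, fun i => ?_, fun i l hil => ?_⟩⟩ <;> rw [hM i]
  · exact pt_apply_eq_zero_of_lt m _ (hij i) (by simpa using hli)
  · exact pt_apply_self m _ _ i (hk i)
  · exact pt_apply_nonpos_of_ne m _ _ _ (by simpa [eq_comm] using Fin.val_ne_of_ne hil)

theorem stdVec_ne_zero {r i : ℕ} (hi : 1 ≤ i) (hir : i ≤ r) : stdVec r i ≠ 0 := fun h => by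
  simpa [stdVec, Nat.sub_add_cancel hi] using congrFun h ⟨i - 1, by omega⟩

theorem stdVec_nonneg (r i : ℕ) : 0 ≤ stdVec r i := fun l => by
  unfold stdVec
  split_ifs <;> norm_num

theorem all_colors_implies_pierced_general
    (r m : ℕ) (hr : 1 ≤ r)
    (S : Set (Fin r → ℝ))
    (hcol : ∀ i : ℕ, 1 ≤ i → i ≤ r → ∃ x ∈ S, x ∈ colorSet r m i) :
    Pierced S ∧
      ∀ i : ℕ, 1 ≤ i → i ≤ r → ∃ t : ℝ, 0 < t ∧ t • stdVec r i ∈ convexHull ℝ S := by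
  obtain ⟨M, hMS, hM⟩ := exists_isUpperTriangularMMatrix_of_forall_colorSet hcol
  have : NeZero r := ⟨by omega⟩
  refine ⟨?_, fun i hi hir => hM.exists_pos_smul_mem_convexHull hMS (stdVec_nonneg r i)
    (stdVec_ne_zero hi hir)⟩
  obtain ⟨t, -, ht⟩ := hM.exists_pos_smul_mem_convexHull hMS zero_le_one one_ne_zero
  refine ⟨t, ?_⟩
  convert ht using 1
  ext
  simp

/-- a subset of `A(r,m)` containing a point of each color is pierced,
and its convex hull meets each positive coordinate half-axis. -/
theorem all_colors_implies_pierced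
    (r m : ℕ) (hr : 1 ≤ r) (hm : 1 ≤ m)
    (S : Set (Fin r → ℝ)) (hSA : S ⊆ Apts r m)
    (hcol : ∀ i : ℕ, 1 ≤ i → i ≤ r → ∃ x ∈ S, x ∈ colorSet r m i) :
    Pierced S ∧
      ∀ i : ℕ, 1 ≤ i → i ≤ r → ∃ t : ℝ, 0 < t ∧ t • stdVec r i ∈ convexHull ℝ S :=
  all_colors_implies_pierced_general r m hr S hcol
end

section
/- Let r ≥ 1 and m ≥ 1 be integers. Let S ⊆ A(r,m) be a pierced simplex, and for each i ∈ {1,…,r} let t_i > 0 be such that t_i·e_i ∈ conv(S). Let p ∈ A(r,m) lie strictly below S, i.e., ∑_{l=1}^r p_l/t_l < 1. Let S′ ⊆ S ∪ {p} with S′ ≠ S be a pierced simplex, and for each i let t′_i > 0 be such that t′_i·e_i ∈ conv(S′). Then t′_i ≤ t_i for every i ∈ {1,…,r}. -/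
/-! The linear functional `f x = ∑ x_l / t_l` takes the value `1` at the `r` axis points
`t_i e_i`, which form a basis of `ℝ^r` and lie in the affine span of `S`. Hence the `r` points
of `S` span `ℝ^r` and form a basis too; the functional equal to `1` on that basis is constant on
the affine span of `S`, so it agrees with `f` on the axis points, hence everywhere, and `f = 1`
on `S`. Since `f p < 1`, the convex hull of `S' ⊆ S ∪ {p}` lies in the half-space `f ≤ 1`, and
`f (t'_i e_i) = t'_i / t_i`. -/

theorem LinearMap.eq_one_of_basis_mem_affineSpan {k V ι : Type*} [Field k] [AddCommGroup V]
    [Module k V] (v : Module.Basis ι k V) (f : V →ₗ[k] k) (hf : ∀ i, f (v i) = 1)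
    {S : Set V} (hS : S.Finite) (hcard : S.ncard = Module.finrank k V)
    (hv : ∀ i, v i ∈ affineSpan k S) : ∀ x ∈ S, f x = 1 := by
  have hspan : ⊤ ≤ Submodule.span k S := by
    rw [← v.span_eq]
    exact Submodule.span_le.mpr
      (Set.range_subset_iff.mpr fun i => affineSpan_subset_span (hv i))
  have := hS.fintype
  let b := setBasisOfTopLeSpanOfCardEqFinrank hspan (by rwa [← Set.ncard_eq_toFinset_card'])
  let h : V →ₗ[k] k := b.constr k fun _ => 1
  have hhS : ∀ x ∈ S, h x = 1 := fun x hx => by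
    simpa [h, b, setBasisOfTopLeSpanOfCardEqFinrank] using
      b.constr_basis k (fun _ => (1 : k)) ⟨x, hx⟩
  have hhf : h = f := v.ext fun i =>
    (AffineMap.eqOn_affineSpan (f := h.toAffineMap) (g := AffineMap.const k V 1) hhS (hv i)).trans
      (hf i).symm
  exact hhf ▸ hhS

theorem stdVec_succ {r : ℕ} (i : Fin r) : stdVec r (i + 1) = Pi.single i 1 := by
  ext l
  simp [stdVec, Pi.single_apply, Fin.ext_iff]

theorem le_of_smul_single_mem_convexHull_of_sum_div_lt_one {r : ℕ}
    {S : Set (Fin r → ℝ)} (hS : S.Finite) (hcard : S.ncard = r)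
    {τ : Fin r → ℝ} (hτ : ∀ i, 0 < τ i) (hτS : ∀ i, τ i • Pi.single i 1 ∈ convexHull ℝ S)
    {p : Fin r → ℝ} (hbelow : ∑ l, p l / τ l < 1)
    {S' : Set (Fin r → ℝ)} (hS' : S' ⊆ S ∪ {p})
    {i : Fin r} {s : ℝ} (hs : s • Pi.single i 1 ∈ convexHull ℝ S') : s ≤ τ i := by
  let f : (Fin r → ℝ) →ₗ[ℝ] ℝ := ∑ l, (τ l)⁻¹ • LinearMap.proj l
  have hf : ∀ x, f x = ∑ l, x l / τ l := fun x => by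
    simp [f, div_eq_inv_mul]
  have hf_axis : ∀ (i : Fin r) (c : ℝ), f (c • Pi.single i 1) = c / τ i := fun i c => by
    simp [hf, Pi.single_apply, ite_div]
  let v : Module.Basis (Fin r) ℝ (Fin r → ℝ) :=
    (Pi.basisFun ℝ (Fin r)).isUnitSMul fun i => (hτ i).ne'.isUnit
  have hv : ∀ i, v i = τ i • Pi.single i 1 := fun i => by
    simp [v, Module.Basis.isUnitSMul_apply]
  have hfS : ∀ x ∈ S, f x = 1 :=
    f.eq_one_of_basis_mem_affineSpan v (fun i => by rw [hv, hf_axis, div_self (hτ i).ne'])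
      hS (by simpa using hcard) fun i => hv i ▸ convexHull_subset_affineSpan S (hτS i)
  have hS'_le : convexHull ℝ S' ⊆ {x | f x ≤ 1} := by
    refine (convexHull_mono hS').trans (convexHull_min ?_ (convex_halfSpace_le f.isLinear 1))
    rintro x (hx | rfl)
    · exact (hfS x hx).le
    · exact ((hf x).trans_lt hbelow).le
  exact (div_le_one (hτ i)).mp (hf_axis i s ▸ hS'_le hs)

theorem pivoting_monotone_general
    (r : ℕ) (S : Set (Fin r → ℝ)) (hcard : S.ncard = r)
    (t : ℕ → ℝ) (ht : ∀ i : ℕ, 1 ≤ i → i ≤ r →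
      0 < t i ∧ t i • stdVec r i ∈ convexHull ℝ S)
    (p : Fin r → ℝ)
    (hbelow : (∑ l : Fin r, p l / t ((l : ℕ) + 1)) < 1)
    (S' : Set (Fin r → ℝ)) (hS'sub : S' ⊆ S ∪ {p})
    (t' : ℕ → ℝ) (ht' : ∀ i : ℕ, 1 ≤ i → i ≤ r →
      0 < t' i ∧ t' i • stdVec r i ∈ convexHull ℝ S') :
    ∀ i : ℕ, 1 ≤ i → i ≤ r → t' i ≤ t i := by
  intro i hi hir
  obtain ⟨j, rfl⟩ : ∃ j : Fin r, i = j + 1 := ⟨⟨i - 1, by omega⟩, by simp; omega⟩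
  have hSfin : S.Finite := Set.finite_of_ncard_ne_zero (by omega)
  have hτ : ∀ l : Fin r, 0 < t (l + 1) ∧ t (l + 1) • Pi.single l 1 ∈ convexHull ℝ S :=
    fun l => stdVec_succ l ▸ ht (l + 1) (by omega) (by omega)
  refine le_of_smul_single_mem_convexHull_of_sum_div_lt_one hSfin hcard (fun l => (hτ l).1)
    (fun l => (hτ l).2) hbelow hS'sub ?_
  exact stdVec_succ j ▸ (ht' (j + 1) hi hir).2

/-- monotonicity of the axis intersection values under pivoting. -/
theorem pivoting_monotone
    (r m : ℕ) (hr : 1 ≤ r) (hm : 1 ≤ m)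
    (S : Set (Fin r → ℝ)) (hSA : S ⊆ Apts r m) (hS : Pierced S) (hcard : S.ncard = r)
    (t : ℕ → ℝ) (ht : ∀ i : ℕ, 1 ≤ i → i ≤ r →
      0 < t i ∧ t i • stdVec r i ∈ convexHull ℝ S)
    (p : Fin r → ℝ) (hpA : p ∈ Apts r m)
    (hbelow : (∑ l : Fin r, p l / t ((l : ℕ) + 1)) < 1)
    (S' : Set (Fin r → ℝ)) (hS'sub : S' ⊆ S ∪ {p}) (hne : S' ≠ S)
    (hS' : Pierced S') (hcard' : S'.ncard = r)
    (t' : ℕ → ℝ) (ht' : ∀ i : ℕ, 1 ≤ i → i ≤ r →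
      0 < t' i ∧ t' i • stdVec r i ∈ convexHull ℝ S') :
    ∀ i : ℕ, 1 ≤ i → i ≤ r → t' i ≤ t i :=
  pivoting_monotone_general r S hcard t ht p hbelow S' hS'sub t' ht'
end

section
/- Let r ≥ 2 and m ≥ 2 be integers. Let S ⊆ A(r,m) be a pierced simplex, and for each l ∈ {1,…,r} let t_l > 0 be such that t_l·e_l ∈ conv(S). If i ∈ {1,…,r} is such that t_i ≤ t_r, then every point x ∈ C_i ∩ L_{r−1} lies strictly above S, i.e., ∑_{l=1}^r x_l/t_l > 1. -/
/-- if `t_i ≤ t_r`, then all points of `C_i ∩ L_{r-1}` lie strictly above `S`. -/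
theorem layer_r_sub_one_above
    (r m : ℕ) (hr : 2 ≤ r) (hm : 2 ≤ m)
    (S : Set (Fin r → ℝ)) (hSA : S ⊆ Apts r m) (hS : Pierced S) (hcard : S.ncard = r)
    (t : ℕ → ℝ) (ht : ∀ l : ℕ, 1 ≤ l → l ≤ r →
      0 < t l ∧ t l • stdVec r l ∈ convexHull ℝ S)
    (i : ℕ) (hi1 : 1 ≤ i) (hir : i ≤ r) (hti : t i ≤ t r) :
    ∀ x ∈ colorSet r m i ∩ layerSet r m (r - 1),
      1 < ∑ l : Fin r, x l / t ((l : ℕ) + 1) := by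
  rintro x ⟨⟨j, k, -, hij, hjr, hk1, hkm, hxc⟩,
           ⟨i', k', hi'1, hi'r, -, hk'1, hk'm, hxl⟩⟩
  have hti0 : 0 < t i := (ht i hi1 hir).1
  have htr0 : 0 < t r := (ht r (by omega) le_rfl).1
  -- the index `b` corresponding to the last coordinate
  set b : Fin r := ⟨r - 1, by omega⟩ with hb
  have hbval : ((b : ℕ)) + 1 = r := by simp [hb]; omega
  -- t r ≤ m
  have htrm : t r ≤ (m : ℝ) := by
    have hmem := (ht r (by omega) le_rfl).2
    have hlin : IsLinearMap ℝ (fun y : Fin r → ℝ => y b) := ⟨fun u v => rfl, fun c u => rfl⟩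
    have hsub : convexHull ℝ S ⊆ {y : Fin r → ℝ | y b ≤ (m : ℝ)} := by
      apply convexHull_min _ (convex_halfSpace_le hlin (m : ℝ))
      intro y hy
      obtain ⟨iy, jy, ky, h1, h2, h3, h4, h5, rfl⟩ := hSA hy
      have hm0 : (0 : ℝ) ≤ (m : ℝ) := by positivity
      simp only [Set.mem_setOf_eq, pt]
      split_ifs with h h'
      · -- iy = r, hence jy = r
        have hjy : jy = r := by omega
        subst hjy
        rw [Finset.Icc_eq_empty (by omega)]
        simp only [Finset.sum_empty, Nat.sub_self, Nat.cast_zero, zero_add, zero_mul]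
        exact_mod_cast h5
      · have : (0 : ℝ) ≤ (m : ℝ) ^ (2 * r - 2 * ((b : ℕ) + 1) + 3) := by positivity
        linarith
      · exact hm0
    have := hsub hmem
    simpa [stdVec, hbval] using this
  -- i = i'
  have heq : pt r m i j k = pt r m i' (r - 1) k' := hxc ▸ hxl
  set a : Fin r := ⟨i - 1, by omega⟩ with ha
  have haval : ((a : ℕ)) + 1 = i := by simp [ha]; omega
  have hpos : 0 < pt r m i j k a := by
    simp only [pt, if_pos haval]
    have hk : (1 : ℝ) ≤ (k : ℝ) := by exact_mod_cast hk1
    have h1 : (0 : ℝ) ≤ ∑ l' ∈ Finset.Icc (j + 1) r, (m : ℝ) ^ (2 * r - 2 * l' + 3) :=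
      Finset.sum_nonneg fun _ _ => by positivity
    have h2 : (0 : ℝ) ≤ ((r - j : ℕ) : ℝ) * (m : ℝ) := by positivity
    linarith
  have hii' : i = i' := by
    by_contra hne
    rw [heq] at hpos
    simp only [pt, if_neg (show ¬((a : ℕ) + 1 = i') by omega)] at hpos
    split_ifs at hpos with h
    · have : (0 : ℝ) ≤ (m : ℝ) ^ (2 * r - 2 * ((a : ℕ) + 1) + 3) := by positivity
      linarith
    · exact lt_irrefl 0 hpos
  subst hii'
  have hilt : i ≤ r - 1 := hi'r
  have hab : a ≠ b := by
    intro h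
    have : (a : ℕ) = (b : ℕ) := by rw [h]
    simp [ha, hb] at this
    omega
  -- compute the sum
  rw [hxl]
  have hzero : ∀ c ∈ Finset.univ, c ∉ ({a, b} : Finset (Fin r)) →
      pt r m i (r - 1) k' c / t ((c : ℕ) + 1) = 0 := by
    intro c _ hc
    simp only [Finset.mem_insert, Finset.mem_singleton, not_or] at hc
    have hca : (c : ℕ) ≠ (a : ℕ) := fun h => hc.1 (Fin.ext h)
    have hcb : (c : ℕ) ≠ (b : ℕ) := fun h => hc.2 (Fin.ext h)
    have hcr : (c : ℕ) < r := c.isLt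
    have h1 : ¬((c : ℕ) + 1 = i) := by simp [ha] at hca; omega
    have h2 : ¬(r - 1 + 1 ≤ (c : ℕ) + 1) := by simp [hb] at hcb; omega
    simp [pt, h1, h2]
  have hsum : ∑ l : Fin r, pt r m i (r - 1) k' l / t ((l : ℕ) + 1)
      = ((m : ℝ) ^ 3 + (m : ℝ) + (k' : ℝ)) / t i + (-((m : ℝ) ^ 3)) / t r := by
    rw [← Finset.sum_subset (Finset.subset_univ ({a, b} : Finset (Fin r))) hzero,
        Finset.sum_pair hab]
    have hA : pt r m i (r - 1) k' a = (m : ℝ) ^ 3 + (m : ℝ) + (k' : ℝ) := by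
      simp only [pt, if_pos haval]
      rw [show r - 1 + 1 = r by omega, Finset.Icc_self, Finset.sum_singleton,
          show 2 * r - 2 * r + 3 = 3 by omega, show r - (r - 1) = 1 by omega]
      push_cast; ring
    have hB : pt r m i (r - 1) k' b = -((m : ℝ) ^ 3) := by
      have h1 : ¬((b : ℕ) + 1 = i) := by omega
      have h2 : r - 1 + 1 ≤ (b : ℕ) + 1 := by omega
      simp only [pt, if_neg h1, if_pos h2]
      rw [show 2 * r - 2 * ((b : ℕ) + 1) + 3 = 3 by omega]
    rw [hA, hB, haval, hbval]
  rw [hsum]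
  -- final arithmetic
  have hk' : (1 : ℝ) ≤ (k' : ℝ) := by exact_mod_cast hk'1
  have hm1 : (2 : ℝ) ≤ (m : ℝ) := by exact_mod_cast hm
  rw [div_add_div _ _ (ne_of_gt hti0) (ne_of_gt htr0), lt_div_iff₀ (by positivity)]
  have hm3 : (0 : ℝ) ≤ (m : ℝ) ^ 3 := by positivity
  nlinarith [mul_pos hti0 htr0, mul_le_mul_of_nonneg_left hti hm3,
    mul_lt_mul_of_pos_left (lt_of_le_of_lt htrm (by linarith : (m : ℝ) < (m : ℝ) + (k' : ℝ))) htr0,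
    mul_le_mul_of_nonneg_right hti htr0.le]
end

section
/- Let r ≥ 2 and m ≥ 2 be integers. Let S ⊆ A(r,m) be a pierced simplex, and for each l ∈ {1,…,r} let t_l > 0 be such that t_l·e_l ∈ conv(S). If i ∈ {1,…,r} is such that t_i ≥ t_r + 1, then every point x ∈ C_i ∩ L_{r−1} lies strictly below S, i.e., ∑_{l=1}^r x_l/t_l < 1. -/
private lemma key_ineq (M K a b : ℝ) (hM : 2 ≤ M) (hK1 : 1 ≤ K) (hKM : K ≤ M)
    (hb : 0 < b) (hab : b + 1 ≤ a) :
    (M^3 + M + K) * b + a * (-(M^3)) < a * b := by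
  nlinarith [mul_nonneg (by linarith : (0:ℝ) ≤ a - b - 1) (by positivity : (0:ℝ) ≤ M^3),
    mul_nonneg (by linarith : (0:ℝ) ≤ a - b - 1) hb.le,
    sq_nonneg (2*b + 1 - M - K),
    mul_nonneg (by linarith : (0:ℝ) ≤ M - K) (by linarith : (0:ℝ) ≤ 3*M + K - 2),
    mul_nonneg (by linarith : (0:ℝ) ≤ M - 2) (sq_nonneg M),
    mul_nonneg (by linarith : (0:ℝ) ≤ M - 2) (by linarith : (0:ℝ) ≤ M)]

/-- if `t_i ≥ t_r + 1`, then all points of `C_i ∩ L_{r-1}` lie strictly below `S`. -/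
theorem layer_r_sub_one_below
    (r m : ℕ) (hr : 2 ≤ r) (hm : 2 ≤ m)
    (S : Set (Fin r → ℝ)) (hSA : S ⊆ Apts r m) (hS : Pierced S) (hcard : S.ncard = r)
    (t : ℕ → ℝ) (ht : ∀ l : ℕ, 1 ≤ l → l ≤ r →
      0 < t l ∧ t l • stdVec r l ∈ convexHull ℝ S)
    (i : ℕ) (hi1 : 1 ≤ i) (hir : i ≤ r) (hti : t r + 1 ≤ t i) :
    ∀ x ∈ colorSet r m i ∩ layerSet r m (r - 1),
      (∑ l : Fin r, x l / t ((l : ℕ) + 1)) < 1 := by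

  rintro x ⟨⟨j, k, hi1', hij, hjr, hk1, hkm, hx1⟩, ⟨i', k', hi'1, hi'j, hj'r, hk'1, hk'm, hx2⟩⟩
  have hr1 : 1 ≤ r := by omega
  have hm0 : (0:ℝ) < (m:ℝ) := by exact_mod_cast (by omega : 0 < m)
  have hfi : i - 1 < r := by omega
  have hii' : i' = i := by
    by_contra hne
    have h1 : 0 < pt r m i j k ⟨i-1, hfi⟩ := by
      simp only [pt]
      rw [if_pos (by omega)]
      have hsum : 0 ≤ ∑ l' ∈ Finset.Icc (j+1) r, (m:ℝ)^(2*r-2*l'+3) :=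
        Finset.sum_nonneg fun _ _ => by positivity
      have hk1' : (1:ℝ) ≤ (k:ℝ) := by exact_mod_cast hk1
      have hrj : (0:ℝ) ≤ ((r - j : ℕ) : ℝ) * (m:ℝ) := by positivity
      linarith
    have h2 : pt r m i' (r-1) k' ⟨i-1, hfi⟩ ≤ 0 := by
      simp only [pt]
      rw [if_neg (by omega)]
      split
      · simp only [neg_nonpos]
        positivity
      · exact le_refl _
    rw [hx1] at hx2
    rw [hx2] at h1
    linarith
  rw [hii'] at hx2 hi'j hi'1
  have hir' : i ≤ r - 1 := hi'j
  clear hx1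
  have hfr : r - 1 < r := by omega
  set fI : Fin r := ⟨i-1, hfi⟩ with hfIdef
  set fR : Fin r := ⟨r-1, hfr⟩ with hfRdef
  have hfIR : fI ≠ fR := by
    simp only [hfIdef, hfRdef, ne_eq, Fin.mk.injEq]
    omega
  have hP : ∀ l : Fin r, x l / t ((l:ℕ)+1) =
      (if l = fI then ((m:ℝ)^3 + (m:ℝ) + (k':ℝ)) / t i else 0) +
      (if l = fR then -((m:ℝ)^3) / t r else 0) := by
    intro l
    rw [hx2]
    simp only [pt]
    by_cases hl1 : (l:ℕ) + 1 = i
    · have hlI : l = fI := by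
        apply Fin.ext
        simp only [hfIdef]
        omega
      rw [if_pos hl1, if_pos hlI, if_neg (by rw [hlI]; exact hfIR), add_zero]
      have hIcc : Finset.Icc ((r-1)+1) r = {r} := by
        rw [show (r-1)+1 = r from by omega, Finset.Icc_self]
      rw [hIcc, Finset.sum_singleton,
        show 2*r - 2*r + 3 = 3 from by omega,
        show (r - (r-1) : ℕ) = 1 from by omega, hl1]
      norm_num
    · rw [if_neg hl1]
      by_cases hl2 : (l:ℕ) = r - 1
      · have hlR : l = fR := by
          apply Fin.ext
          simp only [hfRdef]
          omega
        rw [if_pos (by omega), if_neg (by rw [hlR]; exact fun h => hfIR h.symm),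
          if_pos hlR, zero_add,
          show 2*r - 2*((l:ℕ)+1) + 3 = 3 from by omega, hl2,
          show (r-1) + 1 = r from by omega]
      · have hnI : ¬ l = fI := fun h => hl1 (by rw [h]; simp only [hfIdef]; omega)
        have hnR : ¬ l = fR := fun h => hl2 (by rw [h])
        rw [if_neg (by omega), if_neg hnI, if_neg hnR, zero_div, add_zero]
  rw [Finset.sum_congr rfl (fun l _ => hP l), Finset.sum_add_distrib,
    Finset.sum_ite_eq' Finset.univ fI, Finset.sum_ite_eq' Finset.univ fR]
  simp only [Finset.mem_univ, if_pos]
  have hta := (ht i hi1 hir).1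
  have htr := (ht r hr1 le_rfl).1
  have hM : (2:ℝ) ≤ (m:ℝ) := by exact_mod_cast hm
  have hK1 : (1:ℝ) ≤ (k':ℝ) := by exact_mod_cast hk'1
  have hKM : (k':ℝ) ≤ (m:ℝ) := by exact_mod_cast hk'm
  rw [div_add_div _ _ (ne_of_gt hta) (ne_of_gt htr), div_lt_one (mul_pos hta htr)]
  exact key_ineq (m:ℝ) (k':ℝ) (t i) (t r) hM hK1 hKM htr hti
end

section
/- Let r ≥ 1 and m ≥ 1 be integers. Let S ⊆ A(r,m) be a pierced simplex, and for each l ∈ {1,…,r} let t_l > 0 be such that t_l·e_l ∈ conv(S). Then every point s ∈ S satisfies ∑_{l=1}^r s_l/t_l = 1; consequently, the affine hull of S equals the hyperplane {x ∈ ℝ^r : ∑_{l=1}^r x_l/t_l = 1}. -/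
open Set Module

section AffineSpan

variable {k V P : Type*} [Field k] [AddCommGroup V] [Module k V] [AddTorsor V P]

theorem finrank_vectorSpan_add_one_le_ncard {s : Set P} (hs : s.Finite) (hne : s.Nonempty) :
    finrank k (vectorSpan k s) + 1 ≤ s.ncard := by
  have := hs.fintype
  have := hne.to_subtype
  have h := finrank_vectorSpan_range_add_one_le k ((↑) : s → P)
  rwa [Subtype.range_coe, ← Nat.card_eq_fintype_card, Nat.card_coe_set_eq] at h

theorem AffineIndependent.affineSpan_eq_of_subset_affineSpan_of_ncard_le {ι : Type*} [Fintype ι]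
    [Nonempty ι] {p : ι → P} (hp : AffineIndependent k p) {s : Set P} (hs : s.Finite)
    (hcard : s.ncard ≤ Fintype.card ι) (hps : range p ⊆ affineSpan k s) :
    affineSpan k (range p) = affineSpan k s := by
  have hle : affineSpan k (range p) ≤ affineSpan k s := affineSpan_le.2 hps
  have := finiteDimensional_direction_affineSpan_of_finite k hs
  refine hp.affineSpan_eq_of_le_of_card_eq_finrank_add_one hle (le_antisymm ?_ ?_)
  · rw [← hp.finrank_vectorSpan_add_one, ← direction_affineSpan]
    exact Nat.add_le_add_right (Submodule.finrank_mono (AffineSubspace.direction_le hle)) 1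
  · have hne : s.Nonempty := (affineSpan_nonempty k).1 ((range_nonempty p).mono hps)
    rw [direction_affineSpan]
    exact (finrank_vectorSpan_add_one_le_ncard hs hne).trans hcard

end AffineSpan

section ScaledBasis

variable {k ι : Type*} [Field k] [DecidableEq ι]

theorem affineIndependent_single_of_ne_zero {t : ι → k} (ht : ∀ i, t i ≠ 0) :
    AffineIndependent k fun i => Pi.single i (t i) :=
  (Pi.linearIndependent_single_of_ne_zero ht).affineIndependent

theorem mem_affineSpan_range_single_iff [Fintype ι] {t : ι → k} (ht : ∀ i, t i ≠ 0) {x : ι → k} :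
    x ∈ affineSpan k (range fun i => Pi.single i (t i)) ↔ ∑ i, x i / t i = 1 := by
  have hcomb : ∀ w : ι → k, (∑ i, w i • Pi.single i (t i) : ι → k) = fun i => w i * t i := by
    intro w
    ext j
    simp [Finset.sum_apply, Pi.single_apply]
  constructor
  · intro hx
    obtain ⟨w, hw, rfl⟩ := eq_affineCombination_of_mem_affineSpan_of_fintype hx
    rw [Finset.univ.affineCombination_eq_linear_combination _ _ hw, hcomb]
    simpa [ht] using hw
  · intro hx
    convert affineCombination_mem_affineSpan hx _
    rw [Finset.univ.affineCombination_eq_linear_combination _ _ hx, hcomb]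
    simp [ht]

end ScaledBasis

theorem smul_stdVec_eq_single {r : ℕ} (c : ℝ) (l : Fin r) :
    c • stdVec r (l + 1) = Pi.single l c := by
  ext j
  simp [stdVec, Pi.single_apply, Fin.ext_iff]

theorem affine_hull_hyperplane_general
    (r : ℕ) (hr : 1 ≤ r)
    (S : Set (Fin r → ℝ)) (hcard : S.ncard = r)
    (t : ℕ → ℝ) (ht : ∀ l : ℕ, 1 ≤ l → l ≤ r →
      0 < t l ∧ t l • stdVec r l ∈ convexHull ℝ S) :
    (∀ s ∈ S, (∑ l : Fin r, s l / t ((l : ℕ) + 1)) = 1) ∧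
    (affineSpan ℝ S : Set (Fin r → ℝ)) =
      {x : Fin r → ℝ | (∑ l : Fin r, x l / t ((l : ℕ) + 1)) = 1} := by
  have : Nonempty (Fin r) := ⟨⟨0, hr⟩⟩
  have ht_ne : ∀ l : Fin r, t (l + 1) ≠ 0 := fun l => (ht _ (Nat.succ_pos l) l.isLt).1.ne'
  have hvS : ∀ l : Fin r, Pi.single l (t (l + 1)) ∈ convexHull ℝ S := fun l =>
    smul_stdVec_eq_single _ l ▸ (ht _ (Nat.succ_pos l) l.isLt).2
  have hspan : affineSpan ℝ (range fun l : Fin r => Pi.single l (t (l + 1))) = affineSpan ℝ S :=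
    (affineIndependent_single_of_ne_zero ht_ne).affineSpan_eq_of_subset_affineSpan_of_ncard_le
      (finite_of_ncard_pos (by omega)) (by simp [hcard])
      (range_subset_iff.2 fun l => convexHull_subset_affineSpan S (hvS l))
  have hplane : (affineSpan ℝ S : Set (Fin r → ℝ)) =
      {x : Fin r → ℝ | (∑ l : Fin r, x l / t ((l : ℕ) + 1)) = 1} := by
    ext x
    rw [← hspan, SetLike.mem_coe, mem_affineSpan_range_single_iff ht_ne]
    rfl
  exact ⟨fun s hs => hplane.subset (subset_affineSpan ℝ S hs), hplane⟩

/-- the affine hull of a pierced simplex is the hyperplane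
`∑_l x_l / t_l = 1`, and every point of `S` satisfies this equation. -/
theorem affine_hull_hyperplane
    (r m : ℕ) (hr : 1 ≤ r) (hm : 1 ≤ m)
    (S : Set (Fin r → ℝ)) (hSA : S ⊆ Apts r m) (hS : Pierced S) (hcard : S.ncard = r)
    (t : ℕ → ℝ) (ht : ∀ l : ℕ, 1 ≤ l → l ≤ r →
      0 < t l ∧ t l • stdVec r l ∈ convexHull ℝ S) :
    (∀ s ∈ S, (∑ l : Fin r, s l / t ((l : ℕ) + 1)) = 1) ∧
    (affineSpan ℝ S : Set (Fin r → ℝ)) =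
      {x : Fin r → ℝ | (∑ l : Fin r, x l / t ((l : ℕ) + 1)) = 1} :=
  affine_hull_hyperplane_general r hr S hcard t ht
end

section
/- Let r ≥ 1 and m ≥ 1 be integers. Let S ⊆ A(r,m) be a pierced simplex and let t_r > 0 be such that t_r·e_r ∈ conv(S). Then t_r is an integer with 1 ≤ t_r ≤ m, and the point t_r·e_r is itself an element of S (it is the unique point of color r in S). -/
lemma pt_pos {r m i j k : ℕ} (hk : 1 ≤ k) {l : Fin r} (h : (l:ℕ) + 1 = i) :
    0 < pt r m i j k l := by
  simp only [pt, if_pos h]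
  have h1 : (0:ℝ) ≤ ∑ l' ∈ Finset.Icc (j+1) r, (m:ℝ)^(2*r-2*l'+3) :=
    Finset.sum_nonneg fun _ _ => by positivity
  have h2 : (0:ℝ) ≤ ((r-j:ℕ):ℝ) * m := by positivity
  have h3 : (1:ℝ) ≤ (k:ℝ) := by exact_mod_cast hk
  linarith

lemma pt_nonpos {r m i j k : ℕ} {l : Fin r} (h : (l:ℕ) + 1 ≠ i) :
    pt r m i j k l ≤ 0 := by
  simp only [pt, if_neg h]
  split
  · have : (0:ℝ) ≤ (m:ℝ)^(2*r-2*((l:ℕ)+1)+3) := by positivity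
    linarith
  · exact le_refl _

lemma pt_zero {r m i j k : ℕ} {l : Fin r} (h : (l:ℕ) + 1 ≠ i) (h2 : ¬ (j + 1 ≤ (l:ℕ) + 1)) :
    pt r m i j k l = 0 := by
  simp only [pt, if_neg h, if_neg h2]

lemma pt_layer_r (r m k : ℕ) : pt r m r r k = (k:ℝ) • stdVec r r := by
  funext l
  by_cases h : (l:ℕ) + 1 = r
  · simp only [pt, stdVec, if_pos h, Pi.smul_apply, smul_eq_mul, mul_one]
    rw [Finset.Icc_eq_empty (by omega), Finset.sum_empty, Nat.sub_self]
    push_cast; ring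
  · have h2 : ¬ (r + 1 ≤ (l:ℕ) + 1) := by have := l.isLt; omega
    simp only [pt, stdVec, if_neg h, if_neg h2, Pi.smul_apply, smul_eq_mul, mul_zero]

lemma supp_lemma (r m : ℕ) (F : Finset (Fin r → ℝ))
    (hF : ∀ s ∈ F, s ∈ Apts r m)
    (w : (Fin r → ℝ) → ℝ) (hw : ∀ s ∈ F, 0 ≤ w s)
    (x : Fin r → ℝ) (hx : ∑ s ∈ F, w s • s = x) :
    ∀ L : ℕ, L ≤ r → (∀ l : Fin r, (l:ℕ) + 1 ≤ L → x l ≤ 0) →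
    ∀ s ∈ F, w s ≠ 0 → ∀ i j k : ℕ, 1 ≤ i → i ≤ j → j ≤ r → 1 ≤ k → k ≤ m →
      s = pt r m i j k → L < i := by
  intro L
  induction L with
  | zero => intro _ _ s _ _ i j k hi _ _ _ _ _; omega
  | succ L ih =>
    intro hL hxL
    have IH := ih (by omega) (fun l hl => hxL l (by omega))
    set l0 : Fin r := ⟨L, by omega⟩ with hl0
    have hx0 : ∑ s ∈ F, w s * s l0 = x l0 := by
      rw [← hx]; simp [Finset.sum_apply]
    have hterm : ∀ s ∈ F, 0 ≤ w s * s l0 := by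
      intro s hs
      by_cases hws : w s = 0
      · simp [hws]
      · obtain ⟨i, j, k, hi, hij, hjr, hk, hkm, hrep⟩ := hF s hs
        have hLi : L < i := IH s hs hws i j k hi hij hjr hk hkm hrep
        by_cases hcase : (l0:ℕ) + 1 = i
        · exact mul_nonneg (hw s hs) (le_of_lt (hrep ▸ pt_pos hk hcase))
        · have hnle : ¬ (j + 1 ≤ (l0:ℕ) + 1) := by
            have : (l0:ℕ) = L := rfl
            omega
          rw [hrep, pt_zero hcase hnle, mul_zero]
    have hzero : ∀ s ∈ F, w s * s l0 = 0 := by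
      have hle : ∑ s ∈ F, w s * s l0 ≤ 0 := by
        rw [hx0]; exact hxL l0 (by simp [hl0])
      exact (Finset.sum_eq_zero_iff_of_nonneg hterm).mp
        (le_antisymm hle (Finset.sum_nonneg hterm))
    intro s hs hws i j k hi hij hjr hk hkm hrep
    have hLi : L < i := IH s hs hws i j k hi hij hjr hk hkm hrep
    rcases Nat.lt_or_ge (L+1) i with h | h
    · exact h
    · exfalso
      have hcase : (l0:ℕ) + 1 = i := by
        have : (l0:ℕ) = L := rfl
        omega
      have hpos := pt_pos (r:=r) (m:=m) (j:=j) hk hcase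
      subst hrep
      have hz := hzero _ hs
      rcases mul_eq_zero.mp hz with h' | h'
      · exact hws h'
      · exact (ne_of_gt hpos) h'

/-- the intersection value `t_r` of a pierced simplex with the `r`-th axis
is an integer in `{1,…,m}`, and `t_r • e_r` is the unique point of color `r` in `S`. -/
theorem axis_r_point_in_simplex
    (r m : ℕ) (hr : 1 ≤ r) (hm : 1 ≤ m)
    (S : Set (Fin r → ℝ)) (hSA : S ⊆ Apts r m) (hS : Pierced S) (hcard : S.ncard = r)
    (tr : ℝ) (htr : 0 < tr) (htrS : tr • stdVec r r ∈ convexHull ℝ S) :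
    (∃ k : ℕ, 1 ≤ k ∧ k ≤ m ∧ tr = (k : ℝ)) ∧
    tr • stdVec r r ∈ S ∧
    ∀ x ∈ S, x ∈ colorSet r m r → x = tr • stdVec r r := by
  have hfin : S.Finite := Set.finite_of_ncard_ne_zero (by omega)
  have hSF : ↑hfin.toFinset = S := hfin.coe_toFinset
  set F := hfin.toFinset with hFdef
  have hFA : ∀ s ∈ F, s ∈ Apts r m := fun s hs => hSA (hfin.mem_toFinset.mp hs)
  have hcardF : F.card = r := by
    have h := Set.ncard_eq_toFinset_card S hfin
    rw [hFdef]
    omega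
  -- extract weights for tr point
  rw [← hSF] at htrS
  obtain ⟨w, hw0, hw1, hwsum⟩ := Finset.mem_convexHull'.mp htrS
  -- extract weights for pierced point
  obtain ⟨c, hc⟩ := hS
  rw [← hSF] at hc
  obtain ⟨w', hw'0, hw'1, hw'sum⟩ := Finset.mem_convexHull'.mp hc
  -- c > 0
  have hcpos : 0 < c := by
    by_contra hcle
    push_neg at hcle
    have hall := supp_lemma r m F hFA w' hw'0 _ hw'sum r le_rfl (fun l _ => hcle)
    obtain ⟨s, hs, hws⟩ : ∃ s ∈ F, w' s ≠ 0 := by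
      by_contra hno
      push_neg at hno
      have : (1:ℝ) = 0 := by rw [← hw'1]; exact Finset.sum_eq_zero hno
      norm_num at this
    obtain ⟨i, j, k, hi, hij, hjr, hk, hkm, hrep⟩ := hFA s hs
    have := hall s hs hws i j k hi hij hjr hk hkm hrep
    omega
  -- for each color, a point of that color with positive weight
  have hcol : ∀ l : Fin r, ∃ s, s ∈ F ∧ ∃ j k : ℕ, (l:ℕ)+1 ≤ j ∧ j ≤ r ∧ 1 ≤ k ∧ k ≤ m ∧
      s = pt r m ((l:ℕ)+1) j k := by
    intro l
    have hsuml : ∑ s ∈ F, w' s * s l = c := by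
      have := congrFun hw'sum l
      simpa [Finset.sum_apply] using this
    obtain ⟨s, hs, hpos⟩ : ∃ s ∈ F, 0 < w' s * s l := by
      by_contra hno
      push_neg at hno
      have : ∑ s ∈ F, w' s * s l ≤ 0 := Finset.sum_nonpos hno
      linarith
    obtain ⟨i, j, k, hi, hij, hjr, hk, hkm, hrep⟩ := hFA s hs
    have hsl : 0 < s l := by
      rcases le_or_gt (s l) 0 with h | h
      · nlinarith [hw'0 s hs]
      · exact h
    have hieq : (l:ℕ) + 1 = i := by
      by_contra hne
      exact absurd hsl (not_lt.mpr (hrep ▸ pt_nonpos hne))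
    subst hieq
    exact ⟨s, hs, j, k, hij, hjr, hk, hkm, hrep⟩
  choose f hfF hf using hcol
  have hfpos : ∀ l : Fin r, 0 < f l l := by
    intro l
    obtain ⟨j, k, hlj, hjr, hk, hkm, hrep⟩ := hf l
    exact hrep ▸ pt_pos hk rfl
  have hfnonpos : ∀ l l' : Fin r, l ≠ l' → f l l' ≤ 0 := by
    intro l l' hne
    obtain ⟨j, k, hlj, hjr, hk, hkm, hrep⟩ := hf l
    refine hrep ▸ pt_nonpos ?_
    intro h
    exact hne (Fin.ext (by omega)).symm
  have hinj : Function.Injective f := by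
    intro a b hab
    by_contra hne
    have h1 := hfpos a
    have h2 := hfnonpos b a (Ne.symm hne)
    rw [hab] at h1
    linarith
  have himage : Finset.univ.image f = F := by
    apply Finset.eq_of_subset_of_card_le
    · intro x hx
      obtain ⟨l, _, hl⟩ := Finset.mem_image.mp hx
      exact hl ▸ hfF l
    · rw [hcardF, Finset.card_image_of_injective _ hinj, Finset.card_univ, Fintype.card_fin]
  have hmemf : ∀ x ∈ F, ∃ l, f l = x := by
    intro x hx
    rw [← himage] at hx
    obtain ⟨l, _, hl⟩ := Finset.mem_image.mp hx
    exact ⟨l, hl⟩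
  -- the color-r point
  set lr : Fin r := ⟨r - 1, by omega⟩ with hlrdef
  have hlrval : (lr:ℕ) + 1 = r := by simp [hlrdef]; omega
  obtain ⟨jr, kr, hljr, hjrr, hkr, hkrm, hreplr⟩ := hf lr
  have hjreq : jr = r := by omega
  rw [hlrval, hjreq, pt_layer_r] at hreplr
  -- every point of F with nonzero tr-weight equals f lr
  have hbound : ∀ l : Fin r, (l:ℕ) + 1 ≤ r - 1 → (tr • stdVec r r) l ≤ 0 := by
    intro l hl
    simp only [Pi.smul_apply, stdVec, smul_eq_mul]
    rw [if_neg (by omega)]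
    simp
  have hsupp := supp_lemma r m F hFA w hw0 _ hwsum (r - 1) (by omega) hbound
  have hsuppr : ∀ s ∈ F, w s ≠ 0 → s = f lr := by
    intro s hs hws
    obtain ⟨i, j, k, hi, hij, hjr2, hk, hkm, hrep⟩ := hFA s hs
    have hir : r - 1 < i := hsupp s hs hws i j k hi hij hjr2 hk hkm hrep
    have hieq : i = r := by omega
    have hjeq : j = r := by omega
    rw [hieq, hjeq, pt_layer_r] at hrep
    obtain ⟨l, hl⟩ := hmemf s hs
    by_cases hlr : l = lr
    · rw [← hl, hlr]
    · exfalso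
      have h1 := hfpos l
      rw [hl, hrep] at h1
      have hlne : (l:ℕ) + 1 ≠ r := by
        intro h
        exact hlr (Fin.ext (by omega))
      simp only [Pi.smul_apply, stdVec, smul_eq_mul, if_neg hlne, mul_zero] at h1
      exact lt_irrefl _ h1
  obtain ⟨s0, hs0, hws0⟩ : ∃ s ∈ F, w s ≠ 0 := by
    by_contra hno
    push_neg at hno
    have : (1:ℝ) = 0 := by rw [← hw1]; exact Finset.sum_eq_zero hno
    norm_num at this
  have hflrF : f lr ∈ F := hfF lr
  have hwlr : w (f lr) = 1 := by
    rw [← hw1]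
    exact (Finset.sum_eq_single_of_mem _ hflrF (fun b hb hne => by
      by_contra h
      exact hne (hsuppr b hb h))).symm
  have hveceq : tr • stdVec r r = f lr := by
    rw [← hwsum]
    rw [Finset.sum_eq_single_of_mem _ hflrF (fun b hb hne => by
      have : w b = 0 := by
        by_contra h
        exact hne (hsuppr b hb h)
      rw [this, zero_smul])]
    rw [hwlr, one_smul]
  have htreq : tr = (kr : ℝ) := by
    have := congrFun hveceq lr
    rw [hreplr] at this
    simpa [Pi.smul_apply, stdVec, hlrval] using this
  refine ⟨⟨kr, hkr, hkrm, htreq⟩, ?_, ?_⟩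
  · rw [hveceq]
    exact hfin.mem_toFinset.mp hflrF
  · intro x hxS hxcol
    obtain ⟨j, k, _, hrj, hjr2, hk, hkm, hrepx⟩ := hxcol
    have hjeq : j = r := by omega
    rw [hjeq, pt_layer_r] at hrepx
    have hxF : x ∈ F := hfin.mem_toFinset.mpr hxS
    obtain ⟨l, hl⟩ := hmemf x hxF
    by_cases hlr : l = lr
    · rw [← hl, hlr, ← hveceq]
    · exfalso
      have h1 := hfpos l
      rw [hl, hrepx] at h1
      have hlne : (l:ℕ) + 1 ≠ r := by
        intro h
        exact hlr (Fin.ext (by omega))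
      simp only [Pi.smul_apply, stdVec, smul_eq_mul, if_neg hlne, mul_zero] at h1
      exact lt_irrefl _ h1
end

section
/- Let R > r ≥ 1 and m ≥ 3 be integers and let B = B(r,R,m) ⊆ ℝ^r. Then a subset S ⊆ B is pierced if and only if S contains at least one point of each color i ∈ {1,…,r}; and in that case, for each i ∈ {1,…,r} there exists a real t > 0 such that t·e_i ∈ conv(S). -/
/-- The point `b_{i,j,k}` of the projected construction `B(r,R,m)` (1-based indices). -/
noncomputable def ptB (r R m i j k : ℕ) : Fin r → ℝ := fun l =>
  if (l : ℕ) + 1 = i then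
    (∑ l' ∈ Finset.Icc (j + 1) R, (m : ℝ) ^ (2 * R - 2 * l' + 3))
      + ((R - j : ℕ) : ℝ) * (m : ℝ) + (k : ℝ)
  else if j + 1 ≤ (l : ℕ) + 1 then
    -((m : ℝ) ^ (2 * R - 2 * ((l : ℕ) + 1) + 3))
  else 0

/-- The point set `B(r,R,m) ⊆ ℝ^r`. -/
def Bpts (r R m : ℕ) : Set (Fin r → ℝ) :=
  {x | ∃ i j k : ℕ, 1 ≤ i ∧ i ≤ j ∧ j ≤ r ∧ 1 ≤ k ∧ k ≤ m ∧ x = ptB r R m i j k}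

/-- The set `C_i` of points of `B(r,R,m)` of color `i`. -/
def colorSetB (r R m i : ℕ) : Set (Fin r → ℝ) :=
  {x | ∃ j k : ℕ, 1 ≤ i ∧ i ≤ j ∧ j ≤ r ∧ 1 ≤ k ∧ k ≤ m ∧ x = ptB r R m i j k}

/-- The set `L_j` of points of `B(r,R,m)` of layer `j`. -/
def layerSetB (r R m j : ℕ) : Set (Fin r → ℝ) :=
  {x | ∃ i k : ℕ, 1 ≤ i ∧ i ≤ j ∧ j ≤ r ∧ 1 ≤ k ∧ k ≤ m ∧ x = ptB r R m i j k}

noncomputable def Useq (w a M : ℕ → ℝ) (j : ℕ → ℕ) : ℕ → ℕ → ℝ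
  | 0 => fun _ => 0
  | n+1 => fun i => if i = n then
      (w n + M n * ∑ t ∈ (Finset.range n).filter (fun t => j t ≤ n), Useq w a M j n t) / a n
    else Useq w a M j n i

noncomputable def useq (w a M : ℕ → ℝ) (j : ℕ → ℕ) (n : ℕ) : ℝ := Useq w a M j (n+1) n

lemma Useq_stable (w a M : ℕ → ℝ) (j : ℕ → ℕ) :
    ∀ n i, i < n → Useq w a M j n i = useq w a M j i := by
  intro n
  induction n with
  | zero => intro i h; omega
  | succ n ih =>
    intro i hi
    rcases eq_or_lt_of_le (Nat.lt_succ_iff.mp hi) with h | h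
    · subst h; rfl
    · show Useq w a M j (n+1) i = _
      rw [Useq]; simp only [if_neg (Nat.ne_of_lt h)]
      exact ih i h

lemma useq_spec (w a M : ℕ → ℝ) (j : ℕ → ℕ) (ha : ∀ n, a n ≠ 0) (n : ℕ) :
    useq w a M j n * a n
      = w n + M n * ∑ t ∈ (Finset.range n).filter (fun t => j t ≤ n), useq w a M j t := by
  have : useq w a M j n
      = (w n + M n * ∑ t ∈ (Finset.range n).filter (fun t => j t ≤ n), useq w a M j t) / a n := by
    show Useq w a M j (n+1) n = _
    rw [Useq]; simp only [if_pos rfl]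
    have hs : ∑ t ∈ (Finset.range n).filter (fun t => j t ≤ n), Useq w a M j n t
        = ∑ t ∈ (Finset.range n).filter (fun t => j t ≤ n), useq w a M j t :=
      Finset.sum_congr rfl fun t ht => Useq_stable w a M j n t
        (Finset.mem_range.mp (Finset.mem_filter.mp ht).1)
    rw [hs, if_true]
  rw [this, div_mul_cancel₀ _ (ha n)]

lemma useq_nonneg (w a M : ℕ → ℝ) (j : ℕ → ℕ) (ha : ∀ n, 0 < a n)
    (hw : ∀ n, 0 ≤ w n) (hM : ∀ n, 0 ≤ M n) (n : ℕ) : 0 ≤ useq w a M j n := by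
  induction n using Nat.strong_induction_on with
  | _ n ih =>
    have h := useq_spec w a M j (fun n => (ha n).ne') n
    have hsum : 0 ≤ ∑ t ∈ (Finset.range n).filter (fun t => j t ≤ n), useq w a M j t :=
      Finset.sum_nonneg fun t ht => ih t (Finset.mem_range.mp (Finset.mem_filter.mp ht).1)
    nlinarith [ha n, hw n, hM n, mul_nonneg (hM n) hsum]

noncomputable def Aval (R m j k : ℕ) : ℝ :=
  (∑ l' ∈ Finset.Icc (j + 1) R, (m : ℝ) ^ (2 * R - 2 * l' + 3))
    + ((R - j : ℕ) : ℝ) * (m : ℝ) + (k : ℝ)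

lemma Aval_pos {R m j k : ℕ} (hk : 1 ≤ k) : 0 < Aval R m j k := by
  have h1 : (0:ℝ) ≤ ∑ l' ∈ Finset.Icc (j + 1) R, (m : ℝ) ^ (2 * R - 2 * l' + 3) :=
    Finset.sum_nonneg fun l' _ => pow_nonneg (Nat.cast_nonneg m) _
  have h2 : (0:ℝ) ≤ ((R - j : ℕ) : ℝ) * (m : ℝ) :=
    mul_nonneg (Nat.cast_nonneg _) (Nat.cast_nonneg _)
  have h3 : (1:ℝ) ≤ (k : ℝ) := by exact_mod_cast hk
  unfold Aval; linarith

lemma ptB_apply (r R m i j k : ℕ) (l : Fin r) :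
    ptB r R m i j k l = if (l : ℕ) + 1 = i then Aval R m j k
      else if j ≤ (l : ℕ) then -((m : ℝ) ^ (2 * R - 2 * ((l : ℕ) + 1) + 3)) else 0 := by
  simp only [ptB, Aval]
  congr 1
  simp [Nat.succ_le_succ_iff]

lemma sum_ptB_ge_one {r R m i j k : ℕ} (hi : 1 ≤ i) (hij : i ≤ j) (hjr : j ≤ r)
    (hrR : r < R) (hk : 1 ≤ k) :
    (1 : ℝ) ≤ ∑ t : Fin r, ptB r R m i j k t := by
  classical
  have hir : i - 1 < r := by omega
  set M : ℕ → ℝ := fun n => (m : ℝ) ^ (2 * R - 2 * (n + 1) + 3) with hM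
  set g : ℕ → ℝ := fun n => if n + 1 = i then Aval R m j k
      else if j ≤ n then -(M n) else 0 with hg
  have h1 : ∑ t : Fin r, ptB r R m i j k t = ∑ n ∈ Finset.range r, g n := by
    rw [← Fin.sum_univ_eq_sum_range]
    exact Finset.sum_congr rfl fun l _ => by rw [ptB_apply]
  have hmem : i - 1 ∈ Finset.range r := Finset.mem_range.mpr hir
  have h2 : ∑ n ∈ Finset.range r, g n
      = g (i-1) + ∑ n ∈ (Finset.range r).erase (i-1), g n :=
    (Finset.add_sum_erase _ g hmem).symm
  have hgi : g (i-1) = Aval R m j k := by simp only [hg]; rw [if_pos (by omega)]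
  have h3 : ∑ n ∈ (Finset.range r).erase (i-1), g n
      = -∑ n ∈ ((Finset.range r).erase (i-1)).filter (fun n => j ≤ n), M n := by
    have e1 : ∀ n ∈ (Finset.range r).erase (i-1), g n = if j ≤ n then -(M n) else 0 := by
      intro n hn
      have hne : n ≠ i - 1 := (Finset.mem_erase.mp hn).1
      simp only [hg]
      rw [if_neg (by omega)]
    rw [Finset.sum_congr rfl e1, ← Finset.sum_filter, ← Finset.sum_neg_distrib]
  have h4 : ∑ n ∈ ((Finset.range r).erase (i-1)).filter (fun n => j ≤ n), M n
      ≤ ∑ l' ∈ Finset.Icc (j + 1) R, (m : ℝ) ^ (2 * R - 2 * l' + 3) := by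
    have hinj : ∀ x ∈ ((Finset.range r).erase (i-1)).filter (fun n => j ≤ n),
        ∀ y ∈ ((Finset.range r).erase (i-1)).filter (fun n => j ≤ n), x + 1 = y + 1 → x = y := by
      intro a _ b _ h; omega
    have h4' : ∑ n ∈ ((Finset.range r).erase (i-1)).filter (fun n => j ≤ n), M n
        = ∑ l' ∈ (((Finset.range r).erase (i-1)).filter (fun n => j ≤ n)).image (fun n => n + 1),
            (m:ℝ) ^ (2 * R - 2 * l' + 3) := (Finset.sum_image (f := fun l' => (m:ℝ) ^ (2 * R - 2 * l' + 3)) hinj).symm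
    rw [h4']
    refine Finset.sum_le_sum_of_subset_of_nonneg ?_ (fun l' _ _ => pow_nonneg (Nat.cast_nonneg m) _)
    intro l' hl'
    simp only [Finset.mem_image, Finset.mem_filter, Finset.mem_erase, Finset.mem_range] at hl'
    obtain ⟨n, ⟨⟨_, hnr⟩, hjn⟩, rfl⟩ := hl'
    exact Finset.mem_Icc.mpr ⟨by omega, by omega⟩
  have h5 : (0:ℝ) ≤ ((R - j : ℕ) : ℝ) * (m : ℝ) :=
    mul_nonneg (Nat.cast_nonneg _) (Nat.cast_nonneg _)
  have h6 : (1:ℝ) ≤ (k : ℝ) := by exact_mod_cast hk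
  rw [h1, h2, hgi, h3]
  unfold Aval
  linarith

lemma construct (r R m : ℕ) (S : Set (Fin r → ℝ))
    (hall : ∀ i : ℕ, 1 ≤ i → i ≤ r → ∃ x ∈ S, x ∈ colorSetB r R m i)
    (w : Fin r → ℝ) (hw : ∀ t, 0 ≤ w t) (hw0 : ∃ t, 0 < w t) :
    ∃ s : ℝ, 0 < s ∧ s • w ∈ convexHull ℝ S := by
  classical
  have H : ∀ l : Fin r, ∃ jj kk : ℕ, (l : ℕ) + 1 ≤ jj ∧ jj ≤ r ∧ 1 ≤ kk ∧ kk ≤ m ∧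
      ptB r R m ((l : ℕ) + 1) jj kk ∈ S := by
    intro l
    obtain ⟨x, hxS, j', k', _, h2, h3, h4, h5, hx⟩ := hall ((l : ℕ)+1) (by omega)
      (by have := l.isLt; omega)
    exact ⟨j', k', h2, h3, h4, h5, hx ▸ hxS⟩
  choose j k hij hjr hk1 hkm hxS using H
  set x : Fin r → (Fin r → ℝ) := fun l => ptB r R m ((l:ℕ)+1) (j l) (k l) with hx
  set jj : ℕ → ℕ := fun n => if h : n < r then j ⟨n, h⟩ else n + 1 with hjj
  set kk : ℕ → ℕ := fun n => if h : n < r then k ⟨n, h⟩ else 1 with hkk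
  set aa : ℕ → ℝ := fun n => Aval R m (jj n) (kk n) with haa
  set ww : ℕ → ℝ := fun n => if h : n < r then w ⟨n, h⟩ else 0 with hww
  set MM : ℕ → ℝ := fun n => (m:ℝ) ^ (2 * R - 2 * (n + 1) + 3) with hMM
  set u : ℕ → ℝ := useq ww aa MM jj with hu
  have hkk1 : ∀ n, 1 ≤ kk n := by
    intro n; simp only [hkk]; split
    · exact hk1 _
    · exact le_refl 1
  have haapos : ∀ n, 0 < aa n := fun n => Aval_pos (hkk1 n)
  have hwwnn : ∀ n, 0 ≤ ww n := by
    intro n; simp only [hww]; split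
    · exact hw _
    · exact le_refl 0
  have hMMnn : ∀ n, 0 ≤ MM n := fun n => pow_nonneg (Nat.cast_nonneg m) _
  have hunn : ∀ n, 0 ≤ u n := useq_nonneg ww aa MM jj haapos hwwnn hMMnn
  have hspec := useq_spec ww aa MM jj (fun n => (haapos n).ne')
  have hjjlb : ∀ n, n + 1 ≤ jj n := by
    intro n; simp only [hjj]; split
    · exact hij ⟨n, by assumption⟩
    · exact le_refl _
  have key : ∀ t : Fin r, ∑ l : Fin r, u (l : ℕ) * x l t = w t := by
    intro t
    have htr : (t : ℕ) < r := t.isLt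
    set g : ℕ → ℝ := fun n => u n * (if (t:ℕ) + 1 = n + 1 then aa n
        else if jj n ≤ (t:ℕ) then -(MM (t:ℕ)) else 0) with hgdef
    have h1 : ∑ l : Fin r, u (l:ℕ) * x l t = ∑ n ∈ Finset.range r, g n := by
      rw [← Fin.sum_univ_eq_sum_range]
      refine Finset.sum_congr rfl fun l _ => ?_
      have hxl : x l t = if (t:ℕ) + 1 = (l:ℕ) + 1 then aa (l:ℕ)
          else if jj (l:ℕ) ≤ (t:ℕ) then -(MM (t:ℕ)) else 0 := by
        simp only [hx]
        rw [ptB_apply]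
        simp only [haa, hjj, hkk, hMM, dif_pos l.isLt, Fin.eta]
      rw [hgdef, hxl]
    have htmem : (t:ℕ) ∈ Finset.range r := Finset.mem_range.mpr htr
    have h2 : ∑ n ∈ Finset.range r, g n
        = g (t:ℕ) + ∑ n ∈ (Finset.range r).erase (t:ℕ), g n :=
      (Finset.add_sum_erase _ g htmem).symm
    have hgt : g (t:ℕ) = u (t:ℕ) * aa (t:ℕ) := by simp [hgdef]
    have hsets : ((Finset.range r).erase (t:ℕ)).filter (fun n => jj n ≤ (t:ℕ))
        = (Finset.range (t:ℕ)).filter (fun n => jj n ≤ (t:ℕ)) := by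
      ext n
      simp only [Finset.mem_filter, Finset.mem_erase, Finset.mem_range]
      constructor
      · rintro ⟨⟨hne, hnr⟩, hjn⟩
        exact ⟨by have := hjjlb n; omega, hjn⟩
      · rintro ⟨hnt, hjn⟩
        exact ⟨⟨by omega, by omega⟩, hjn⟩
    have h3 : ∑ n ∈ (Finset.range r).erase (t:ℕ), g n
        = -(MM (t:ℕ) * ∑ n ∈ (Finset.range (t:ℕ)).filter (fun n => jj n ≤ (t:ℕ)), u n) := by
      have e1 : ∀ n ∈ (Finset.range r).erase (t:ℕ),
          g n = if jj n ≤ (t:ℕ) then -(MM (t:ℕ)) * u n else 0 := by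
        intro n hn
        have hne : n ≠ (t:ℕ) := (Finset.mem_erase.mp hn).1
        simp only [hgdef]
        rw [if_neg (by omega)]
        by_cases hc : jj n ≤ (t:ℕ)
        · rw [if_pos hc, if_pos hc]; ring
        · rw [if_neg hc, if_neg hc, mul_zero]
      rw [Finset.sum_congr rfl e1, ← Finset.sum_filter, hsets, ← Finset.mul_sum, neg_mul]
    have hfin := hspec (t:ℕ)
    have hwt : ww (t:ℕ) = w t := by simp only [hww, dif_pos htr, Fin.eta]
    rw [h1, h2, hgt, h3]
    rw [hfin, hwt]
    ring
  obtain ⟨t0, ht0⟩ := hw0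
  have hut0 : 0 < u (t0:ℕ) := by
    have h := hspec (t0:ℕ)
    have hsum : 0 ≤ ∑ t ∈ (Finset.range (t0:ℕ)).filter (fun n => jj n ≤ (t0:ℕ)), u t :=
      Finset.sum_nonneg fun t _ => hunn t
    have hwt0 : ww (t0:ℕ) = w t0 := by simp only [hww, dif_pos t0.isLt, Fin.eta]
    have hpos : 0 < u (t0:ℕ) * aa (t0:ℕ) := by
      rw [h, hwt0]
      nlinarith [mul_nonneg (hMMnn (t0:ℕ)) hsum]
    rcases lt_or_eq_of_le (hunn (t0:ℕ)) with hlt | heq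
    · exact hlt
    · exfalso; rw [← heq, zero_mul] at hpos; exact lt_irrefl 0 hpos
  have hsupos : 0 < ∑ l : Fin r, u (l:ℕ) :=
    Finset.sum_pos' (fun l _ => hunn _) ⟨t0, Finset.mem_univ _, hut0⟩
  refine ⟨(∑ l : Fin r, u (l:ℕ))⁻¹, inv_pos.mpr hsupos, ?_⟩
  have hcm := Finset.centerMass_mem_convexHull (t := Finset.univ)
    (w := fun l : Fin r => u (l:ℕ)) (z := x) (fun l _ => hunn _) hsupos (fun l _ => hxS l)
  have hcmeq : Finset.univ.centerMass (fun l : Fin r => u (l:ℕ)) x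
      = (∑ l : Fin r, u (l:ℕ))⁻¹ • w := by
    rw [Finset.centerMass]
    congr 1
    funext t
    rw [Finset.sum_apply]
    simp only [Pi.smul_apply, smul_eq_mul]
    exact key t
  rwa [hcmeq] at hcm

/-- a subset of `B(r,R,m)` is pierced iff it contains a point of each
color; in that case its convex hull meets each positive coordinate half-axis. -/
theorem B_pierced_iff_all_colors
    (r R m : ℕ) (hr : 1 ≤ r) (hrR : r < R) (hm : 3 ≤ m)
    (S : Set (Fin r → ℝ)) (hSB : S ⊆ Bpts r R m) :
    (Pierced S ↔ ∀ i : ℕ, 1 ≤ i → i ≤ r → ∃ x ∈ S, x ∈ colorSetB r R m i) ∧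
    (Pierced S → ∀ i : ℕ, 1 ≤ i → i ≤ r →
      ∃ t : ℝ, 0 < t ∧ t • stdVec r i ∈ convexHull ℝ S) := by
  classical
  have fwd : Pierced S → ∀ i : ℕ, 1 ≤ i → i ≤ r → ∃ x ∈ S, x ∈ colorSetB r R m i := by
    rintro ⟨c, hc⟩ i hi1 hir
    have hlin : IsLinearMap ℝ (fun x : Fin r → ℝ => ∑ t : Fin r, x t) :=
      ⟨fun x y => Finset.sum_add_distrib, fun c x => by simp [Finset.mul_sum]⟩
    have hhalf : Convex ℝ {x : Fin r → ℝ | 1 ≤ ∑ t : Fin r, x t} :=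
      convex_halfSpace_ge hlin 1
    have hS1 : S ⊆ {x : Fin r → ℝ | 1 ≤ ∑ t : Fin r, x t} := by
      intro x hxmem
      obtain ⟨i', j', k', h1, h2, h3, h4, h5, rfl⟩ := hSB hxmem
      exact sum_ptB_ge_one h1 h2 h3 hrR h4
    have hcin : (1:ℝ) ≤ ∑ _t : Fin r, c := convexHull_min hS1 hhalf hc
    have hsumc : ∑ _t : Fin r, c = (r:ℝ) * c := by
      rw [Finset.sum_const, Finset.card_univ, Fintype.card_fin, nsmul_eq_mul]
    have hcpos : 0 < c := by
      rw [hsumc] at hcin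
      by_contra hle
      push_neg at hle
      have hr0 : (0:ℝ) ≤ (r:ℝ) := Nat.cast_nonneg r
      nlinarith
    by_contra hno
    push_neg at hno
    set i0 : Fin r := ⟨i - 1, by omega⟩ with hi0
    have hlin2 : IsLinearMap ℝ (fun x : Fin r → ℝ => x i0) := ⟨fun _ _ => rfl, fun _ _ => rfl⟩
    have hS2 : S ⊆ {x : Fin r → ℝ | x i0 ≤ 0} := by
      intro x hxmem
      obtain ⟨i', j', k', h1, h2, h3, h4, h5, hx⟩ := hSB hxmem
      by_cases hii : i' = i
      · exact absurd ⟨j', k', hi1, hii ▸ h2, h3, h4, h5, hii ▸ hx⟩ (hno x hxmem)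
      · subst hx
        show ptB r R m i' j' k' i0 ≤ 0
        rw [ptB_apply]
        have hne : ¬ ((i0 : ℕ) + 1 = i') := by
          have hv : (i0 : ℕ) = i - 1 := rfl
          omega
        rw [if_neg hne]
        split
        · exact neg_nonpos.mpr (pow_nonneg (Nat.cast_nonneg m) _)
        · exact le_refl 0
    have hc2 : c ≤ 0 := convexHull_min hS2 (convex_halfSpace_le hlin2 0) hc
    linarith
  refine ⟨⟨fwd, ?_⟩, ?_⟩
  · intro hall
    obtain ⟨s, hs, hmem⟩ := construct r R m S hall (fun _ => 1)
      (fun _ => zero_le_one) ⟨⟨0, hr⟩, one_pos⟩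
    refine ⟨s, ?_⟩
    have heq : s • (fun _ => (1:ℝ) : Fin r → ℝ) = (fun _ => s : Fin r → ℝ) := by
      funext t; simp
    rwa [heq] at hmem
  · intro hp i hi1 hir
    have hall := fwd hp
    have hwpos : 0 < stdVec r i ⟨i - 1, by omega⟩ := by
      have hcond : ((⟨i - 1, by omega⟩ : Fin r) : ℕ) + 1 = i := by
        simp only [Fin.val_mk]; omega
      unfold stdVec
      rw [if_pos hcond]
      exact one_pos
    obtain ⟨s, hs, hmem⟩ := construct r R m S hall (stdVec r i)
      (fun t => by unfold stdVec; split <;> norm_num) ⟨⟨i - 1, by omega⟩, hwpos⟩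
    exact ⟨s, hs, hmem⟩
end

section
/- Let R > r ≥ 2 and m ≥ 3 be integers and let B = B(r,R,m) ⊆ ℝ^r. Let S ⊆ B be a pierced simplex, and for each l ∈ {1,…,r} let t_l > 0 be such that t_l·e_l ∈ conv(S). If i ∈ {1,…,r} is such that t_i ≤ t_r, then every point x ∈ C_i ∩ L_{r−1} lies strictly above S, i.e., ∑_{l=1}^r x_l/t_l > 1. -/
/-- for `B(r,R,m)`, if `t_i ≤ t_r` then all points of `C_i ∩ L_{r-1}`
lie strictly above `S`. -/
theorem B_layer_r_sub_one_above
    (r R m : ℕ) (hr : 2 ≤ r) (hrR : r < R) (hm : 3 ≤ m)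
    (S : Set (Fin r → ℝ)) (hSB : S ⊆ Bpts r R m) (hS : Pierced S) (hcard : S.ncard = r)
    (t : ℕ → ℝ) (ht : ∀ l : ℕ, 1 ≤ l → l ≤ r →
      0 < t l ∧ t l • stdVec r l ∈ convexHull ℝ S)
    (i : ℕ) (hi1 : 1 ≤ i) (hir : i ≤ r) (hti : t i ≤ t r) :
    ∀ x ∈ colorSetB r R m i ∩ layerSetB r R m (r - 1),
      1 < ∑ l : Fin r, x l / t ((l : ℕ) + 1) := by
  intro x hx
  obtain ⟨hxc, hxl⟩ := hx
  obtain ⟨j, k, -, hij, hjr, hk1, hkm, hxcE⟩ := hxc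
  obtain ⟨i', k', hi'1, hi'r1, -, hk'1, hk'm, hxlE⟩ := hxl
  have hr1 : 1 ≤ r := by omega
  set li : Fin r := ⟨i - 1, by omega⟩ with hli_def
  set lr : Fin r := ⟨r - 1, by omega⟩ with hlr_def
  have hli : (li : ℕ) + 1 = i := by simp only [hli_def]; omega
  have hlr : (lr : ℕ) + 1 = r := by simp only [hlr_def]; omega
  -- the color of `x` in the layer representation is `i`
  have hii' : i = i' := by
    by_contra hne
    have h1 : x li = (∑ l' ∈ Finset.Icc (j + 1) R, (m : ℝ) ^ (2 * R - 2 * l' + 3))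
        + ((R - j : ℕ) : ℝ) * m + k := by
      rw [hxcE]; simp only [ptB]; rw [if_pos hli]
    have h2 : x li ≤ 0 := by
      rw [hxlE]; simp only [ptB]
      rw [if_neg (by omega : ¬ ((li : ℕ) + 1 = i'))]
      split
      · have : (0 : ℝ) ≤ (m : ℝ) ^ (2 * R - 2 * ((li : ℕ) + 1) + 3) := by positivity
        linarith
      · exact le_rfl
    have hpos : 0 < x li := by
      rw [h1]
      have hs : 0 ≤ ∑ l' ∈ Finset.Icc (j + 1) R, (m : ℝ) ^ (2 * R - 2 * l' + 3) :=
        Finset.sum_nonneg fun _ _ => by positivity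
      have hkk : (1 : ℝ) ≤ (k : ℝ) := by exact_mod_cast hk1
      have hmm : (0 : ℝ) ≤ ((R - j : ℕ) : ℝ) * m := by positivity
      linarith
    linarith
  subst hii'
  have hirlt : i < r := by omega
  set E : ℝ := (m : ℝ) ^ (2 * R - 2 * r + 3) with hE
  set Q' : ℝ := ∑ l' ∈ Finset.Icc (r + 1) R, (m : ℝ) ^ (2 * R - 2 * l' + 3) with hQ'
  set Q : ℝ := Q' + ((R - r : ℕ) : ℝ) * m + m with hQ
  have hm0 : (0 : ℝ) ≤ m := by positivity
  have hE0 : 0 ≤ E := by rw [hE]; positivity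
  have hQ'0 : 0 ≤ Q' := Finset.sum_nonneg fun _ _ => by positivity
  have hQ0 : 0 ≤ Q := by
    have h := mul_nonneg (Nat.cast_nonneg (R - r) : (0 : ℝ) ≤ ((R - r : ℕ) : ℝ)) hm0
    rw [hQ]; linarith
  -- every point of `B` has `r`-th coordinate at most `Q`
  have hB : ∀ y ∈ Bpts r R m, y lr ≤ Q := by
    rintro y ⟨a, b, c, ha1, hab, hbr, hc1, hcm, rfl⟩
    simp only [ptB]
    split_ifs with h1 h2
    · have hbr' : b = r := by omega
      subst hbr'
      have hcQ : (c : ℝ) ≤ m := by exact_mod_cast hcm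
      rw [hQ, hQ']
      linarith
    · have : (0 : ℝ) ≤ (m : ℝ) ^ (2 * R - 2 * ((lr : ℕ) + 1) + 3) := by positivity
      linarith
    · linarith
  obtain ⟨htr_pos, htr_mem⟩ := ht r hr1 le_rfl
  obtain ⟨hti_pos, -⟩ := ht i hi1 hir
  -- hence `t r ≤ Q`
  have htrQ : t r ≤ Q := by
    have hsub : S ⊆ {y : Fin r → ℝ | y lr ≤ Q} := fun y hy => hB y (hSB hy)
    have hlin : IsLinearMap ℝ (fun y : Fin r → ℝ => y lr) := ⟨fun _ _ => rfl, fun _ _ => rfl⟩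
    have hconv : Convex ℝ {y : Fin r → ℝ | y lr ≤ Q} := convex_halfSpace_le hlin Q
    have hmem := convexHull_min hsub hconv htr_mem
    simpa [stdVec, Set.mem_setOf_eq, hlr] using hmem
  set V : ℝ := (∑ l' ∈ Finset.Icc ((r - 1) + 1) R, (m : ℝ) ^ (2 * R - 2 * l' + 3))
      + ((R - (r - 1) : ℕ) : ℝ) * m + (k' : ℝ) with hV
  have hne_lilr : li ≠ lr := fun h => by
    have := congrArg Fin.val h
    omega
  -- compute the sum coordinatewise
  have hpt : ∀ l : Fin r, x l / t ((l : ℕ) + 1)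
      = (if l = li then V / t i else 0) + (if l = lr then -E / t r else 0) := by
    intro l
    rcases eq_or_ne l li with h | hne1
    · subst h
      rw [if_pos rfl, if_neg hne_lilr, hxlE]
      simp only [ptB]
      rw [if_pos hli, hli, ← hV, add_zero]
    rcases eq_or_ne l lr with h | hne2
    · subst h
      rw [if_neg hne1, if_pos rfl, hxlE]
      simp only [ptB]
      rw [if_neg (by omega : ¬ ((lr : ℕ) + 1 = i)),
        if_pos (by omega : (r - 1) + 1 ≤ (lr : ℕ) + 1), hlr, ← hE, zero_add]
    · have hc1 : ¬ ((l : ℕ) + 1 = i) := fun hc => hne1 (Fin.ext (by omega))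
      have hc2 : ¬ ((r - 1) + 1 ≤ (l : ℕ) + 1) := fun hc => hne2 (Fin.ext (by omega))
      rw [if_neg hne1, if_neg hne2, hxlE]
      simp only [ptB]
      rw [if_neg hc1, if_neg hc2, zero_div, add_zero]
  have hsum : ∑ l : Fin r, x l / t ((l : ℕ) + 1) = V / t i + -E / t r := by
    rw [Finset.sum_congr rfl fun l _ => hpt l, Finset.sum_add_distrib,
      Finset.sum_ite_eq' Finset.univ li (fun _ => V / t i),
      Finset.sum_ite_eq' Finset.univ lr (fun _ => -E / t r)]
    simp
  have hins : Finset.Icc r R = insert r (Finset.Icc (r + 1) R) := by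
    rw [Finset.Icc_add_one_left_eq_Ioc, Finset.Ioc_insert_left hrR.le]
  have hVE : V = E + (Q + (k' : ℝ)) := by
    rw [hV, hQ, hQ', hE, show (r - 1) + 1 = r from by omega,
      show (R - (r - 1) : ℕ) = (R - r) + 1 from by omega, hins,
      Finset.sum_insert (by simp)]
    push_cast
    ring
  have hk'1R : (1 : ℝ) ≤ (k' : ℝ) := by exact_mod_cast hk'1
  have hV0 : 0 ≤ V := by rw [hVE]; linarith
  have h1 : V / t r ≤ V / t i := by
    apply div_le_div_of_nonneg_left hV0 hti_pos hti
  have h2 : 1 < (V - E) / t r := by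
    rw [one_lt_div htr_pos, hVE]
    linarith
  rw [hsum]
  have h3 : (V - E) / t r = V / t r + -E / t r := by ring
  linarith [h3 ▸ h2]
end

section
/- Let R > r ≥ 2 and m ≥ 3 be integers and let B = B(r,R,m) ⊆ ℝ^r. Let S ⊆ B be a pierced simplex, and for each l ∈ {1,…,r} let t_l > 0 be such that t_l·e_l ∈ conv(S). If i ∈ {1,…,r} is such that t_i ≥ t_r + 1, then every point x ∈ C_i ∩ L_{r−1} lies strictly below S, i.e., ∑_{l=1}^r x_l/t_l < 1. -/
/- ### Auxiliary lemmas -/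

lemma ptB_app_own (r R m i j k : ℕ) (l : Fin r) (h : (l:ℕ) + 1 = i) :
    ptB r R m i j k l = (∑ l' ∈ Finset.Icc (j + 1) R, (m : ℝ) ^ (2 * R - 2 * l' + 3))
      + ((R - j : ℕ) : ℝ) * (m : ℝ) + (k : ℝ) := by
  simp only [ptB]; rw [if_pos h]

lemma ptB_app_neg (r R m i j k : ℕ) (l : Fin r) (h1 : (l:ℕ) + 1 ≠ i)
    (h2 : j + 1 ≤ (l:ℕ) + 1) :
    ptB r R m i j k l = -((m : ℝ) ^ (2 * R - 2 * ((l : ℕ) + 1) + 3)) := by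
  simp only [ptB]; rw [if_neg h1, if_pos h2]

lemma ptB_app_zero (r R m i j k : ℕ) (l : Fin r) (h1 : (l:ℕ) + 1 ≠ i)
    (h2 : ¬ (j + 1 ≤ (l:ℕ) + 1)) :
    ptB r R m i j k l = 0 := by
  simp only [ptB]; rw [if_neg h1, if_neg h2]

lemma stdVec_app_one (r i : ℕ) (l : Fin r) (h : (l:ℕ) + 1 = i) : stdVec r i l = 1 := by
  simp only [stdVec]; rw [if_pos h]

lemma stdVec_app_zero (r i : ℕ) (l : Fin r) (h : (l:ℕ) + 1 ≠ i) : stdVec r i l = 0 := by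
  simp only [stdVec]; rw [if_neg h]

lemma ptB_app_own_pos (r R m i j k : ℕ) (l : Fin r) (h : (l:ℕ) + 1 = i) (hk : 1 ≤ k) :
    0 < ptB r R m i j k l := by
  rw [ptB_app_own r R m i j k l h]
  have h1 : (0:ℝ) ≤ ∑ l' ∈ Finset.Icc (j + 1) R, (m:ℝ) ^ (2*R - 2*l' + 3) :=
    Finset.sum_nonneg fun _ _ => by positivity
  have h2 : (0:ℝ) ≤ ((R - j : ℕ):ℝ) * m := by positivity
  have h3 : (1:ℝ) ≤ (k : ℝ) := by exact_mod_cast hk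
  linarith

lemma ptB_app_nonpos (r R m i j k : ℕ) (l : Fin r) (h1 : (l:ℕ) + 1 ≠ i) :
    ptB r R m i j k l ≤ 0 := by
  by_cases h2 : j + 1 ≤ (l:ℕ) + 1
  · rw [ptB_app_neg r R m i j k l h1 h2]
    have : (0:ℝ) ≤ (m:ℝ) ^ (2*R - 2*((l:ℕ)+1) + 3) := by positivity
    linarith
  · rw [ptB_app_zero r R m i j k l h1 h2]

lemma keyNat (m r R : ℕ) (hm : 3 ≤ m) (hrR : r < R) :
    (2*m - 2) * ((∑ l' ∈ Finset.Icc (r+1) R, m^(2*R - 2*l' + 3)) + (R - r)*m + m)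
      < m^(2*R - 2*r + 3) := by
  induction R, hrR using Nat.le_induction with
  | base =>
      rw [Finset.Icc_self, Finset.sum_singleton,
        show 2*(r+1) - 2*(r+1) + 3 = 3 by omega,
        show 2*(r+1) - 2*r + 3 = 5 by omega,
        show (r+1) - r = 1 by omega]
      obtain ⟨n, rfl⟩ : ∃ n, m = n + 3 := ⟨m - 3, by omega⟩
      rw [show 2*(n+3) - 2 = 2*n + 4 by omega]
      nlinarith [n.zero_le, Nat.zero_le (n^5), Nat.zero_le (n^4), Nat.zero_le (n^3),
        Nat.zero_le (n^2), Nat.zero_le (n*n)]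
  | succ R hR ih =>
      have hS : (∑ l' ∈ Finset.Icc (r+1) (R+1), m^(2*(R+1) - 2*l' + 3))
          = m^2 * (∑ l' ∈ Finset.Icc (r+1) R, m^(2*R - 2*l' + 3)) + m^3 := by
        rw [Finset.sum_Icc_succ_top (by omega)]
        congr 1
        · rw [Finset.mul_sum]
          refine Finset.sum_congr rfl fun l' hl' => ?_
          have hl2 := (Finset.mem_Icc.mp hl').2
          rw [show 2*(R+1) - 2*l' + 3 = 2 + (2*R - 2*l' + 3) by omega, pow_add]
        · rw [show 2*(R+1) - 2*(R+1) + 3 = 3 by omega]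
      rw [hS, show 2*(R+1) - 2*r + 3 = 2 + (2*R - 2*r + 3) by omega, pow_add,
        show R + 1 - r = (R - r) + 1 by omega]
      set d := R - r with hd
      have hd1 : 1 ≤ d := by omega
      set s := ∑ l' ∈ Finset.Icc (r+1) R, m^(2*R - 2*l' + 3) with hs
      have h9 : 9 ≤ m*m := Nat.mul_le_mul hm hm
      have hdm : (d+2)*m ≤ d*m^3 := by
        calc (d+2)*m ≤ (9*d)*m := Nat.mul_le_mul_right _ (by omega)
          _ ≤ (m*m*d)*m := Nat.mul_le_mul_right _ (Nat.mul_le_mul_right _ h9)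
          _ = d*m^3 := by ring
      calc (2*m-2) * (m^2*s + m^3 + (d+1)*m + m)
          ≤ (2*m-2) * (m^2 * (s + d*m + m)) := by
            refine Nat.mul_le_mul_left _ ?_
            have : (d+1)*m + m = (d+2)*m := by ring
            nlinarith [hdm]
        _ = m^2 * ((2*m-2) * (s + d*m + m)) := by rw [mul_left_comm]
        _ < m^2 * m^(2*R - 2*r + 3) := by
            exact mul_lt_mul_of_pos_left ih (by positivity)

lemma tr_bounds (r R m : ℕ) (hr : 2 ≤ r) (hm : 3 ≤ m)
    (S : Set (Fin r → ℝ)) (hSB : S ⊆ Bpts r R m) (τ : ℝ)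
    (hmem : τ • stdVec r r ∈ convexHull ℝ S) :
    (∑ l' ∈ Finset.Icc (r+1) R, (m:ℝ) ^ (2*R - 2*l' + 3)) + ((R - r : ℕ):ℝ) * m + 1 ≤ τ ∧
    τ ≤ (∑ l' ∈ Finset.Icc (r+1) R, (m:ℝ) ^ (2*R - 2*l' + 3)) + ((R - r : ℕ):ℝ) * m + m := by
  classical
  rw [convexHull_eq] at hmem
  obtain ⟨ι, T, w, z, hw0, hw1, hz, hcm⟩ := hmem
  rw [Finset.centerMass_eq_of_sum_1 _ _ hw1] at hcm
  set T' := T.filter (fun a => w a ≠ 0) with hT'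
  have hw1' : ∑ a ∈ T', w a = 1 := by rw [hT', Finset.sum_filter_ne_zero]; exact hw1
  have hcm' : ∑ a ∈ T', w a • z a = τ • stdVec r r := by
    rw [← hcm]
    refine Finset.sum_subset (Finset.filter_subset _ _) (fun a ha hna => ?_)
    have : w a = 0 := by
      by_contra h
      exact hna (Finset.mem_filter.mpr ⟨ha, h⟩)
    simp [this]
  have hcoord : ∀ l : Fin r, ∑ a ∈ T', w a * z a l = τ * stdVec r r l := by
    intro l
    have h := congrFun hcm' l
    simpa [Finset.sum_apply, Pi.smul_apply, smul_eq_mul] using h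
  have hwpos : ∀ a ∈ T', 0 < w a := by
    intro a ha
    have h1 := hw0 a (Finset.filter_subset _ _ ha)
    have h2 := (Finset.mem_filter.mp ha).2
    exact lt_of_le_of_ne h1 (Ne.symm h2)
  have hex : ∀ a : ι, ∃ p : ℕ × ℕ × ℕ, a ∈ T' →
      (1 ≤ p.1 ∧ p.1 ≤ p.2.1 ∧ p.2.1 ≤ r ∧ 1 ≤ p.2.2 ∧ p.2.2 ≤ m ∧
        z a = ptB r R m p.1 p.2.1 p.2.2) := by
    intro a
    by_cases ha : a ∈ T'
    · obtain ⟨i, j, k, h⟩ := hSB (hz a (Finset.filter_subset _ _ ha))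
      exact ⟨(i, j, k), fun _ => h⟩
    · exact ⟨(1,1,1), fun h => absurd h ha⟩
  choose F hF using hex
  have hne : T'.Nonempty := by
    rcases Finset.eq_empty_or_nonempty T' with h | h
    · rw [h, Finset.sum_empty] at hw1'; norm_num at hw1'
    · exact h
  -- every support point has color r
  have hIr : ∀ a ∈ T', (F a).1 = r := by
    by_contra hcon
    push_neg at hcon
    obtain ⟨b, hb, hbne⟩ := hcon
    have hne' : (T'.image (fun a => (F a).1)).Nonempty := hne.image _
    set c := (T'.image (fun a => (F a).1)).min' hne' with hc
    obtain ⟨a₀, ha₀, hIa₀⟩ := Finset.mem_image.mp ((T'.image _).min'_mem hne')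
    have hcmin : ∀ a ∈ T', c ≤ (F a).1 := fun a ha =>
      Finset.min'_le _ _ (Finset.mem_image_of_mem _ ha)
    have h0 := hF a₀ ha₀
    have hc1 : 1 ≤ c := by
      have h' : (F a₀).1 = c := hIa₀
      omega
    have hbr : (F b).1 < r := lt_of_le_of_ne ((hF b hb).2.1.trans (hF b hb).2.2.1) hbne
    have hclt : c < r := lt_of_le_of_lt (hcmin b hb) hbr
    have hcr1 : c - 1 < r := by omega
    have hsum := hcoord ⟨c - 1, hcr1⟩
    rw [stdVec_app_zero r r ⟨c - 1, hcr1⟩ (show c - 1 + 1 ≠ r by omega), mul_zero] at hsum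
    have hterm0 : ∀ a ∈ T', 0 ≤ w a * z a ⟨c - 1, hcr1⟩ := by
      intro a ha
      have hp := hF a ha
      rcases eq_or_ne ((F a).1) c with h | h
      · refine mul_nonneg (hwpos a ha).le ?_
        rw [hp.2.2.2.2.2]
        exact (ptB_app_own_pos r R m (F a).1 (F a).2.1 (F a).2.2 ⟨c - 1, hcr1⟩
          (show c - 1 + 1 = (F a).1 by omega) hp.2.2.2.1).le
      · have hIge : c < (F a).1 := lt_of_le_of_ne (hcmin a ha) (Ne.symm h)
        rw [hp.2.2.2.2.2]
        refine mul_nonneg (hwpos a ha).le ?_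
        rw [ptB_app_zero r R m (F a).1 (F a).2.1 (F a).2.2 ⟨c - 1, hcr1⟩
          (show c - 1 + 1 ≠ (F a).1 by omega)
          (show ¬ ((F a).2.1 + 1 ≤ c - 1 + 1) by
            have hJ : c < (F a).2.1 := lt_of_lt_of_le hIge hp.2.1
            omega)]
    have htermpos : 0 < w a₀ * z a₀ ⟨c - 1, hcr1⟩ := by
      have hp := hF a₀ ha₀
      have hIa₀' : (F a₀).1 = c := hIa₀
      refine mul_pos (hwpos a₀ ha₀) ?_
      rw [hp.2.2.2.2.2]
      exact ptB_app_own_pos r R m (F a₀).1 (F a₀).2.1 (F a₀).2.2 ⟨c - 1, hcr1⟩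
        (show c - 1 + 1 = (F a₀).1 by omega) hp.2.2.2.1
    have hpos : 0 < ∑ a ∈ T', w a * z a ⟨c - 1, hcr1⟩ :=
      Finset.sum_pos' hterm0 ⟨a₀, ha₀, htermpos⟩
    rw [hsum] at hpos
    exact lt_irrefl 0 hpos
  -- evaluate coordinate r - 1
  have hr1 : r - 1 < r := by omega
  have hsumr := hcoord ⟨r - 1, hr1⟩
  rw [stdVec_app_one r r ⟨r - 1, hr1⟩ (show r - 1 + 1 = r by omega), mul_one] at hsumr
  have hval : ∀ a ∈ T', z a ⟨r - 1, hr1⟩ =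
      ((∑ l' ∈ Finset.Icc (r+1) R, (m:ℝ) ^ (2*R - 2*l' + 3)) + ((R - r : ℕ):ℝ) * m)
        + ((F a).2.2 : ℝ) := by
    intro a ha
    have hp := hF a ha
    have hia : (F a).1 = r := hIr a ha
    have hja : (F a).2.1 = r := le_antisymm hp.2.2.1 (hia ▸ hp.2.1)
    rw [hp.2.2.2.2.2, hia, hja,
      ptB_app_own r R m r r (F a).2.2 ⟨r - 1, hr1⟩ (show r - 1 + 1 = r by omega)]
  set NA : ℝ := (∑ l' ∈ Finset.Icc (r+1) R, (m:ℝ) ^ (2*R - 2*l' + 3)) + ((R - r : ℕ):ℝ) * m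
    with hNA
  have hτ : τ = ∑ a ∈ T', w a * (NA + ((F a).2.2 : ℝ)) := by
    rw [← hsumr]
    exact (Finset.sum_congr rfl fun a ha => by rw [hval a ha]).symm
  constructor
  · calc NA + 1 = ∑ a ∈ T', w a * (NA + 1) := by rw [← Finset.sum_mul, hw1', one_mul]
      _ ≤ ∑ a ∈ T', w a * (NA + ((F a).2.2 : ℝ)) := by
          refine Finset.sum_le_sum fun a ha => ?_
          have hk : (1:ℝ) ≤ ((F a).2.2 : ℝ) := by exact_mod_cast (hF a ha).2.2.2.1
          exact mul_le_mul_of_nonneg_left (by linarith) (hwpos a ha).le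
      _ = τ := hτ.symm
  · calc τ = ∑ a ∈ T', w a * (NA + ((F a).2.2 : ℝ)) := hτ
      _ ≤ ∑ a ∈ T', w a * (NA + (m:ℝ)) := by
          refine Finset.sum_le_sum fun a ha => ?_
          have hk : ((F a).2.2 : ℝ) ≤ (m:ℝ) := by exact_mod_cast (hF a ha).2.2.2.2.1
          exact mul_le_mul_of_nonneg_left (by linarith) (hwpos a ha).le
      _ = NA + m := by rw [← Finset.sum_mul, hw1', one_mul]

/-- for `B(r,R,m)`, if `t_i ≥ t_r + 1` then all points of `C_i ∩ L_{r-1}`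
lie strictly below `S`. -/
theorem B_layer_r_sub_one_below
    (r R m : ℕ) (hr : 2 ≤ r) (hrR : r < R) (hm : 3 ≤ m)
    (S : Set (Fin r → ℝ)) (hSB : S ⊆ Bpts r R m) (hS : Pierced S) (hcard : S.ncard = r)
    (t : ℕ → ℝ) (ht : ∀ l : ℕ, 1 ≤ l → l ≤ r →
      0 < t l ∧ t l • stdVec r l ∈ convexHull ℝ S)
    (i : ℕ) (hi1 : 1 ≤ i) (hir : i ≤ r) (hti : t r + 1 ≤ t i) :
    ∀ x ∈ colorSetB r R m i ∩ layerSetB r R m (r - 1),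
      (∑ l : Fin r, x l / t ((l : ℕ) + 1)) < 1 := by
  intro x hx
  obtain ⟨hxc, hxl⟩ := hx
  obtain ⟨j', k', hi1', hij', hj'r, hk'1, hk'm, hx1⟩ := hxc
  obtain ⟨i'', k, hi''1, hi''r1, hr1r, hk1, hkm, hx2⟩ := hxl
  -- identify the color of x
  have hilt : i - 1 < r := by omega
  have hii : i'' = i := by
    by_contra hne
    have heq : ptB r R m i j' k' = ptB r R m i'' (r - 1) k := by rw [← hx1, ← hx2]
    have h1 : 0 < ptB r R m i j' k' ⟨i - 1, hilt⟩ :=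
      ptB_app_own_pos r R m i j' k' ⟨i - 1, hilt⟩ (show i - 1 + 1 = i by omega) hk'1
    have h2 : ptB r R m i'' (r - 1) k ⟨i - 1, hilt⟩ ≤ 0 :=
      ptB_app_nonpos r R m i'' (r - 1) k ⟨i - 1, hilt⟩ (show i - 1 + 1 ≠ i'' by omega)
    rw [heq] at h1
    linarith
  subst hii
  have hir1 : i'' ≤ r - 1 := hi''r1
  -- facts about t
  obtain ⟨htr_pos, htr_mem⟩ := ht r (by omega) le_rfl
  obtain ⟨hti_pos, hti_mem⟩ := ht i'' hi1 hir
  obtain ⟨hlow, hhigh⟩ := tr_bounds r R m hr hm S hSB (t r) htr_mem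
  -- abbreviations
  set NR : ℝ := ∑ l' ∈ Finset.Icc (r+1) R, (m:ℝ) ^ (2*R - 2*l' + 3) with hNR
  set A : ℝ := NR + ((R - r : ℕ):ℝ) * m with hA
  set P : ℝ := (m:ℝ) ^ (2*R - 2*r + 3) with hP
  have hNRnn : 0 ≤ NR := Finset.sum_nonneg fun _ _ => by positivity
  have hAnn : 0 ≤ A := by
    have : (0:ℝ) ≤ ((R - r : ℕ):ℝ) * m := by positivity
    rw [hA]; linarith
  have hPpos : 0 < P := by rw [hP]; positivity
  -- the two relevant coordinates
  have hr1lt : r - 1 < r := by omega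
  set li : Fin r := ⟨i'' - 1, hilt⟩ with hli
  set lr : Fin r := ⟨r - 1, hr1lt⟩ with hlr
  have hline : li ≠ lr := by
    have hv : (li:ℕ) ≠ (lr:ℕ) := by
      rw [hli, hlr]
      show i'' - 1 ≠ r - 1
      omega
    exact fun hcontra => hv (congrArg Fin.val hcontra)
  -- value of x at li
  have hxli : x li = P + A + m + k := by
    rw [hx2, ptB_app_own r R m i'' (r - 1) k li (show (li:ℕ) + 1 = i'' from by
      rw [hli]; show i'' - 1 + 1 = i''; omega)]
    have hicc : Finset.Icc ((r-1) + 1) R = insert r (Finset.Icc (r+1) R) := by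
      ext y
      simp only [Finset.mem_Icc, Finset.mem_insert]
      omega
    rw [hicc, Finset.sum_insert (by simp)]
    have hRr : R - (r - 1) = (R - r) + 1 := by omega
    rw [hRr]
    push_cast
    rw [hP, hA, hNR]
    push_cast
    ring
  -- value of x at lr
  have hxlr : x lr = -P := by
    rw [hx2, ptB_app_neg r R m i'' (r - 1) k lr
      (show (lr:ℕ) + 1 ≠ i'' from by rw [hlr]; show r - 1 + 1 ≠ i''; omega)
      (le_refl ((r - 1) + 1) : (r - 1) + 1 ≤ (lr:ℕ) + 1)]
    rw [hP]
    congr 1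
    congr 1
    show 2*R - 2*((lr:ℕ)+1) + 3 = 2*R - 2*r + 3
    rw [hlr]
    show 2*R - 2*(r - 1 + 1) + 3 = 2*R - 2*r + 3
    omega
  -- x vanishes elsewhere
  have hxz : ∀ l : Fin r, l ∉ ({li, lr} : Finset (Fin r)) → x l / t ((l:ℕ)+1) = 0 := by
    intro l hl
    simp only [Finset.mem_insert, Finset.mem_singleton] at hl
    push_neg at hl
    have h1 : (l:ℕ) + 1 ≠ i'' := by
      intro hcontra
      apply hl.1
      rw [hli]
      apply Fin.ext
      show (l:ℕ) = i'' - 1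
      omega
    have h2 : ¬ ((r - 1) + 1 ≤ (l:ℕ) + 1) := by
      intro hcontra
      apply hl.2
      rw [hlr]
      apply Fin.ext
      show (l:ℕ) = r - 1
      have := l.isLt
      omega
    rw [hx2, ptB_app_zero r R m i'' (r - 1) k l h1 h2, zero_div]
  -- reduce the sum to two terms
  have hsum : (∑ l : Fin r, x l / t ((l:ℕ) + 1))
      = x li / t ((li:ℕ) + 1) + x lr / t ((lr:ℕ) + 1) := by
    rw [← Finset.sum_subset (Finset.subset_univ ({li, lr} : Finset (Fin r)))
      (fun l _ hl => hxz l hl)]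
    exact Finset.sum_pair hline
  have hlit : t ((li:ℕ) + 1) = t i'' := by
    congr 1
    rw [hli]
    show i'' - 1 + 1 = i''
    omega
  have hlrt : t ((lr:ℕ) + 1) = t r := by
    congr 1
    rw [hlr]
    show r - 1 + 1 = r
    omega
  rw [hsum, hlit, hlrt, hxli, hxlr]
  -- final arithmetic
  have hkey : (2*(m:ℝ) - 2) * (A + m) < P := by
    have h := keyNat m r R hm hrR
    have h' : (((2*m - 2) * ((∑ l' ∈ Finset.Icc (r+1) R, m^(2*R - 2*l' + 3))
        + (R - r)*m + m) : ℕ) : ℝ) < ((m^(2*R - 2*r + 3) : ℕ) : ℝ) := by exact_mod_cast h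
    push_cast [Nat.cast_sub (show 2 ≤ 2*m by omega)] at h'
    rw [hP, hA, hNR]
    push_cast
    linarith [h']
  have hm3 : (3:ℝ) ≤ (m:ℝ) := by exact_mod_cast hm
  have hk1r : (1:ℝ) ≤ (k:ℝ) := by exact_mod_cast hk1
  have hkmr : (k:ℝ) ≤ (m:ℝ) := by exact_mod_cast hkm
  have hnum : (0:ℝ) ≤ P + A + (m:ℝ) + (k:ℝ) := by linarith
  have hτ1 : (0:ℝ) < t r + 1 := by linarith
  have hstep : (P + A + (m:ℝ) + (k:ℝ)) / t i'' ≤ (P + A + (m:ℝ) + (k:ℝ)) / (t r + 1) := by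
    gcongr
  have hmain : (P + A + (m:ℝ) + (k:ℝ)) / (t r + 1) - P / t r < 1 := by
    rw [div_sub_div _ _ (ne_of_gt hτ1) (ne_of_gt htr_pos),
      div_lt_one (by positivity)]
    have hb1 : (A + 1) * t r ≤ t r * t r := mul_le_mul_of_nonneg_right hlow htr_pos.le
    have hb2 : ((m:ℝ) + (k:ℝ) - 2) * t r ≤ (2*(m:ℝ) - 2) * (A + m) :=
      mul_le_mul (by linarith) hhigh htr_pos.le (by linarith)
    nlinarith [hb1, hb2, hkey]
  have hneg : -P / t r = -(P / t r) := neg_div _ _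
  rw [hneg]
  linarith [hstep, hmain]
end

section
/- Let R > r ≥ 2 and m ≥ 3 be integers and let B = B(r,R,m) ⊆ ℝ^r. Let S ⊆ B be a pierced simplex, and for each l ∈ {1,…,r} let t_l > 0 be such that t_l·e_l ∈ conv(S). If i ∈ {1,…,r} is such that t_i = min{t_1,…,t_r}, then every point x ∈ C_i \ L_r lies strictly above S, i.e., ∑_{l=1}^r x_l/t_l > 1; in particular, the point t_i·e_i is an element of S. -/
/-! The `r` axis points `t_l e_l` are affinely independent and lie in `conv S`, while `S` has only
`r` points; hence `aff S` is the hyperplane through them, so `∑ x_l / t_l = 1` on `S`. The `r`-th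
coordinates of points of `B` are at most `h = (b_{r,r,m})_r`, so `t_i ≤ t_r ≤ h`. A point `x` of
colour `i` and layer `j < r` has coordinate sum `> h`, and all its coordinates but the `i`-th are
nonpositive, so minimality of `t_i` gives `∑ x_l / t_l ≥ (∑ x_l) / t_i > h / t_i ≥ 1`. Finally some
point of `S` has a positive `i`-th coordinate, hence colour `i`; lying on the hyperplane it is in
layer `r`, where it is a multiple of `e_i`, namely `t_i e_i`. -/

open Finset

section ConvexHull

variable {𝕜 E ι : Type*} [Field 𝕜]

theorem AffineIndependent.affineSpan_eq_of_range_subset_convexHull [PartialOrder 𝕜]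
    [AddCommGroup E] [Module 𝕜 E] [Fintype ι] [Nonempty ι] {p : ι → E}
    (hp : AffineIndependent 𝕜 p) {S : Set E} (hS : S.Finite) (hcard : S.ncard ≤ Fintype.card ι)
    (hpS : Set.range p ⊆ convexHull 𝕜 S) :
    affineSpan 𝕜 (Set.range p) = affineSpan 𝕜 S := by
  classical
  have := finiteDimensional_direction_affineSpan_of_finite 𝕜 hS
  have hle : affineSpan 𝕜 (Set.range p) ≤ affineSpan 𝕜 S :=
    affineSpan_le.2 (hpS.trans (convexHull_subset_affineSpan S))
  refine hp.affineSpan_eq_of_le_of_card_eq_finrank_add_one hle (le_antisymm ?_ ?_)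
  · rw [← hp.finrank_vectorSpan_add_one, ← direction_affineSpan]
    exact Nat.add_le_add_right (Submodule.finrank_mono (AffineSubspace.direction_le hle)) 1
  · have hpos : 0 < S.ncard :=
      (Set.ncard_pos hS).2 (convexHull_nonempty_iff.1 ((Set.range_nonempty p).mono hpS))
    have hc : #hS.toFinset = (S.ncard - 1) + 1 := by
      rw [← Set.ncard_eq_toFinset_card S hS]
      omega
    have := finrank_vectorSpan_image_finset_le 𝕜 id hS.toFinset hc
    rw [Finset.image_id, Set.Finite.coe_toFinset, ← direction_affineSpan] at this
    omega

theorem sum_div_eq_one_of_mem_affineSpan_single [Fintype ι] [DecidableEq ι] {t : ι → 𝕜}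
    (ht : ∀ l, t l ≠ 0) {x : ι → 𝕜}
    (hx : x ∈ affineSpan 𝕜 (Set.range fun l => Pi.single l (t l))) :
    ∑ l, x l / t l = 1 := by
  obtain ⟨w, hw, rfl⟩ := eq_affineCombination_of_mem_affineSpan_of_fintype hx
  rw [Finset.affineCombination_eq_linear_combination _ _ _ hw, ← hw]
  refine Finset.sum_congr rfl fun l _ => ?_
  simp [Finset.sum_apply, Pi.single_apply, ht l]

theorem sum_div_eq_one_of_single_mem_convexHull [PartialOrder 𝕜] [Fintype ι] [DecidableEq ι]
    [Nonempty ι] {S : Set (ι → 𝕜)} (hS : S.Finite) (hcard : S.ncard ≤ Fintype.card ι) {t : ι → 𝕜}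
    (ht : ∀ l, t l ≠ 0) (hmem : ∀ l, Pi.single l (t l) ∈ convexHull 𝕜 S) {s : ι → 𝕜}
    (hs : s ∈ S) : ∑ l, s l / t l = 1 := by
  have hp : AffineIndependent 𝕜 fun l => Pi.single l (t l) :=
    (Pi.linearIndependent_single_of_ne_zero ht).affineIndependent
  refine sum_div_eq_one_of_mem_affineSpan_single ht ?_
  rw [hp.affineSpan_eq_of_range_subset_convexHull hS hcard (Set.range_subset_iff.2 hmem)]
  exact subset_affineSpan 𝕜 S hs

theorem apply_le_of_mem_convexHull [LinearOrder 𝕜] [IsStrictOrderedRing 𝕜] {S : Set (ι → 𝕜)}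
    {l : ι} {c : 𝕜} (h : ∀ s ∈ S, s l ≤ c) {y : ι → 𝕜} (hy : y ∈ convexHull 𝕜 S) : y l ≤ c :=
  convexHull_min (t := {w : ι → 𝕜 | w l ≤ c}) (fun s hs => h s hs)
    (convex_halfSpace_le (f := fun w : ι → 𝕜 => w l) ⟨fun _ _ => rfl, fun _ _ => rfl⟩ c) hy

theorem exists_mem_pos_apply_of_mem_convexHull [LinearOrder 𝕜] [IsStrictOrderedRing 𝕜]
    {S : Set (ι → 𝕜)} {y : ι → 𝕜} (hy : y ∈ convexHull 𝕜 S) {l : ι} (hl : 0 < y l) :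
    ∃ s ∈ S, 0 < s l := by
  by_contra! h
  exact (apply_le_of_mem_convexHull h hy).not_gt hl

end ConvexHull

/-- The `i`-th coordinate of `b_{i,j,k}`. -/
noncomputable def ptBHeight (R m j k : ℕ) : ℝ :=
  (∑ l ∈ Icc (j + 1) R, (m : ℝ) ^ (2 * R - 2 * l + 3)) + ((R - j : ℕ) : ℝ) * m + k

section PointsB

variable {r R m i j k : ℕ}

theorem ptB_apply_of_eq {l : Fin r} (hl : (l : ℕ) + 1 = i) :
    ptB r R m i j k l = ptBHeight R m j k := by
  simp [ptB, ptBHeight, hl]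

theorem ptB_apply_nonpos {l : Fin r} (hl : (l : ℕ) + 1 ≠ i) : ptB r R m i j k l ≤ 0 := by
  simp only [ptB, if_neg hl]
  split_ifs
  · exact neg_nonpos.2 (by positivity)
  · exact le_rfl

theorem eq_of_ptB_apply_pos {l : Fin r} (h : 0 < ptB r R m i j k l) : (l : ℕ) + 1 = i := by
  by_contra hne
  exact (ptB_apply_nonpos hne).not_gt h

theorem ptBHeight_nonneg : 0 ≤ ptBHeight R m j k := by
  unfold ptBHeight; positivity

theorem ptBHeight_le_ptBHeight_of_le (hk : k ≤ m) : ptBHeight R m j k ≤ ptBHeight R m j m := by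
  unfold ptBHeight; gcongr

theorem ptB_apply_le_ptBHeight {l : Fin r} (hl : (l : ℕ) + 1 = r) (hij : i ≤ j) (hjr : j ≤ r)
    (hkm : k ≤ m) : ptB r R m i j k l ≤ ptBHeight R m r m := by
  by_cases hli : (l : ℕ) + 1 = i
  · rw [ptB_apply_of_eq hli, show j = r by omega]
    exact ptBHeight_le_ptBHeight_of_le hkm
  · exact (ptB_apply_nonpos hli).trans ptBHeight_nonneg

theorem apply_le_ptBHeight_of_mem_convexHull {l : Fin r} (hl : (l : ℕ) + 1 = r)
    {y : Fin r → ℝ} (hy : y ∈ convexHull ℝ (Bpts r R m)) : y l ≤ ptBHeight R m r m := by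
  refine apply_le_of_mem_convexHull ?_ hy
  rintro _ ⟨i, j, k, -, hij, hjr, -, hkm, rfl⟩
  exact ptB_apply_le_ptBHeight hl hij hjr hkm

theorem ptB_last_layer : ptB r R m i r k = ptBHeight R m r k • stdVec r i := by
  funext l
  by_cases hli : (l : ℕ) + 1 = i
  · simp [ptB_apply_of_eq hli, stdVec, hli]
  · simp [ptB, stdVec, hli, l.isLt]

theorem sum_ptB (hi : 1 ≤ i) (hij : i ≤ j) (hjr : j ≤ r) (hrR : r ≤ R) :
    ∑ l : Fin r, ptB r R m i j k l =
      (∑ l ∈ Icc (r + 1) R, (m : ℝ) ^ (2 * R - 2 * l + 3)) + ((R - j : ℕ) : ℝ) * m + k := by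
  set w : ℕ → ℝ := fun l => (m : ℝ) ^ (2 * R - 2 * l + 3)
  have hsplit : ∀ l : Fin r, ptB r R m i j k l =
      (if (l : ℕ) + 1 = i then ptBHeight R m j k else 0) +
        (if j + 1 ≤ (l : ℕ) + 1 then -w (l + 1) else 0) := by
    intro l
    by_cases h : (l : ℕ) + 1 = i
    · simp [ptB_apply_of_eq h, h, show ¬ j + 1 ≤ i by omega]
    · simp [ptB, h, w]
  have hpeak :
      ∑ n ∈ range r, (if n + 1 = i then ptBHeight R m j k else 0) = ptBHeight R m j k := by
    rw [sum_eq_single_of_mem (i - 1) (mem_range.2 (by omega)) fun n _ hn => if_neg (by omega)]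
    exact if_pos (by omega)
  have htail : ∑ n ∈ range r, (if j + 1 ≤ n + 1 then -w (n + 1) else 0) =
      -∑ l ∈ Icc (j + 1) r, w l := by
    rw [range_eq_Ico, sum_Ico_add' (fun n => if j + 1 ≤ n then -w n else 0), ← sum_filter,
      ← sum_neg_distrib]
    congr 1
    ext n
    simp only [mem_filter, mem_Ico, mem_Icc]
    omega
  have hsplitR :
      ∑ l ∈ Icc (j + 1) R, w l = ∑ l ∈ Icc (j + 1) r, w l + ∑ l ∈ Icc (r + 1) R, w l := by
    simp only [Finset.Icc_add_one_left_eq_Ioc]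
    exact (sum_Ioc_consecutive w hjr hrR).symm
  simp only [hsplit, sum_add_distrib]
  rw [Fin.sum_univ_eq_sum_range (fun n => if n + 1 = i then ptBHeight R m j k else 0),
    Fin.sum_univ_eq_sum_range (fun n => if j + 1 ≤ n + 1 then -w (n + 1) else 0),
    hpeak, htail, ptBHeight, hsplitR]
  ring

theorem ptBHeight_lt_sum_ptB (hi : 1 ≤ i) (hij : i ≤ j) (hjr : j < r) (hrR : r ≤ R)
    (hk : 1 ≤ k) :
    ptBHeight R m r m < ∑ l : Fin r, ptB r R m i j k l := by
  rw [sum_ptB hi hij hjr.le hrR, ptBHeight]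
  have hRj : ((R - r : ℕ) : ℝ) + 1 ≤ ((R - j : ℕ) : ℝ) := by
    exact_mod_cast (by omega : R - r + 1 ≤ R - j)
  have hk' : (1 : ℝ) ≤ k := by exact_mod_cast hk
  nlinarith [(Nat.cast_nonneg m : (0 : ℝ) ≤ m)]

theorem smul_stdVec_succ (c : ℝ) (a : Fin r) : c • stdVec r (a + 1) = Pi.single a c := by
  funext l
  by_cases h : l = a
  · simp [stdVec, h]
  · simp [stdVec, h, Fin.val_inj]

theorem one_lt_sum_div_of_mem_colorSetB_diff {τ : Fin r → ℝ} {a : Fin r}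
    (hτ : ∀ l, τ a ≤ τ l) (hτa : 0 < τ a) (hτh : τ a ≤ ptBHeight R m r m) (hrR : r ≤ R)
    {x : Fin r → ℝ} (hx : x ∈ colorSetB r R m (a + 1) \ layerSetB r R m r) :
    1 < ∑ l, x l / τ l := by
  obtain ⟨⟨j, k, -, haj, hjr, hk, hkm, rfl⟩, hx⟩ := hx
  have hjr : j < r :=
    hjr.lt_of_ne (by rintro rfl; exact hx ⟨_, k, by omega, haj, le_rfl, hk, hkm, rfl⟩)
  have hterm : ∀ l, ptB r R m (a + 1) j k l / τ a ≤ ptB r R m (a + 1) j k l / τ l := by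
    intro l
    by_cases hl : l = a
    · rw [hl]
    · rw [div_eq_mul_inv, div_eq_mul_inv]
      exact mul_le_mul_of_nonpos_left (inv_anti₀ hτa (hτ l))
        (ptB_apply_nonpos fun h => hl (Fin.ext (by omega)))
  calc 1 < (∑ l, ptB r R m (a + 1) j k l) / τ a :=
        (one_lt_div hτa).2 (hτh.trans_lt (ptBHeight_lt_sum_ptB (by omega) haj hjr hrR hk))
    _ = ∑ l, ptB r R m (a + 1) j k l / τ a := sum_div _ _ _
    _ ≤ ∑ l, ptB r R m (a + 1) j k l / τ l := sum_le_sum fun l _ => hterm l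

theorem eq_single_of_sum_div_eq_one {τ : Fin r → ℝ} {a : Fin r} (hτa : 0 < τ a)
    (habove : ∀ x ∈ colorSetB r R m (a + 1) \ layerSetB r R m r, 1 < ∑ l, x l / τ l)
    {s : Fin r → ℝ} (hsB : s ∈ Bpts r R m) (hsa : 0 < s a) (hs : ∑ l, s l / τ l = 1) :
    s = Pi.single a (τ a) := by
  obtain ⟨i, j, k, -, hij, hjr, hk, hkm, rfl⟩ := hsB
  obtain rfl := eq_of_ptB_apply_pos hsa
  have hlayer : ptB r R m (a + 1) j k ∈ layerSetB r R m r := by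
    by_contra h
    exact (habove _ ⟨⟨j, k, by omega, hij, hjr, hk, hkm, rfl⟩, h⟩).ne' hs
  obtain ⟨i', k', -, -, -, -, -, hjk⟩ := hlayer
  rw [hjk] at hs hsa ⊢
  obtain rfl := eq_of_ptB_apply_pos hsa
  rw [ptB_last_layer, smul_stdVec_succ] at hs ⊢
  rw [Fintype.sum_eq_single a fun l hl => by simp [hl], Pi.single_eq_same,
    div_eq_one_iff_eq hτa.ne'] at hs
  rw [hs]

end PointsB

theorem B_min_axis_above_general
    (r R m : ℕ) (hrR : r < R)
    (S : Set (Fin r → ℝ)) (hSB : S ⊆ Bpts r R m) (hcard : S.ncard = r)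
    (t : ℕ → ℝ) (ht : ∀ l : ℕ, 1 ≤ l → l ≤ r →
      0 < t l ∧ t l • stdVec r l ∈ convexHull ℝ S)
    (i : ℕ) (hi1 : 1 ≤ i) (hir : i ≤ r)
    (hmin : ∀ l : ℕ, 1 ≤ l → l ≤ r → t i ≤ t l) :
    (∀ x ∈ colorSetB r R m i \ layerSetB r R m r,
      1 < ∑ l : Fin r, x l / t ((l : ℕ) + 1)) ∧
    t i • stdVec r i ∈ S := by
  obtain ⟨a, rfl⟩ : ∃ a : Fin r, (a : ℕ) + 1 = i := ⟨⟨i - 1, by omega⟩, by simp; omega⟩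
  have hpos : ∀ l : Fin r, 0 < t (l + 1) := fun l => (ht _ (by omega) l.isLt).1
  have hmem : ∀ l : Fin r, Pi.single l (t (l + 1)) ∈ convexHull ℝ S := fun l => by
    simpa only [smul_stdVec_succ] using (ht _ (by omega) l.isLt).2
  have hplane : ∀ s ∈ S, ∑ l : Fin r, s l / t (l + 1) = 1 := fun s hs =>
    have : Nonempty (Fin r) := ⟨a⟩
    sum_div_eq_one_of_single_mem_convexHull (Set.finite_of_ncard_pos (by omega))
      (by rw [Fintype.card_fin, hcard]) (fun l => (hpos l).ne') hmem hs
  have hth : t (a + 1) ≤ ptBHeight R m r m := by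
    let b : Fin r := ⟨r - 1, by omega⟩
    have hb : (b : ℕ) + 1 = r := by simp [b]; omega
    have hlast := apply_le_ptBHeight_of_mem_convexHull hb (convexHull_mono hSB (hmem b))
    rw [Pi.single_eq_same, hb] at hlast
    exact (hmin r (by omega) le_rfl).trans hlast
  have habove : ∀ x ∈ colorSetB r R m (a + 1) \ layerSetB r R m r,
      1 < ∑ l : Fin r, x l / t ((l : ℕ) + 1) := fun x hx =>
    one_lt_sum_div_of_mem_colorSetB_diff (fun l => hmin _ (by omega) l.isLt) (hpos a) hth hrR.le hx
  refine ⟨habove, ?_⟩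
  obtain ⟨s, hs, hsa⟩ := exists_mem_pos_apply_of_mem_convexHull (hmem a) (l := a)
    (by simpa using hpos a)
  rw [smul_stdVec_succ, ← eq_single_of_sum_div_eq_one (hpos a) habove (hSB hs) hsa (hplane s hs)]
  exact hs

/-- for `B(r,R,m)`, if `t_i` is minimal then all points of `C_i \ L_r`
lie strictly above `S`; in particular `t_i • e_i ∈ S`. -/
theorem B_min_axis_above
    (r R m : ℕ) (hr : 2 ≤ r) (hrR : r < R) (hm : 3 ≤ m)
    (S : Set (Fin r → ℝ)) (hSB : S ⊆ Bpts r R m) (hS : Pierced S) (hcard : S.ncard = r)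
    (t : ℕ → ℝ) (ht : ∀ l : ℕ, 1 ≤ l → l ≤ r →
      0 < t l ∧ t l • stdVec r l ∈ convexHull ℝ S)
    (i : ℕ) (hi1 : 1 ≤ i) (hir : i ≤ r)
    (hmin : ∀ l : ℕ, 1 ≤ l → l ≤ r → t i ≤ t l) :
    (∀ x ∈ colorSetB r R m i \ layerSetB r R m r,
      1 < ∑ l : Fin r, x l / t ((l : ℕ) + 1)) ∧
    t i • stdVec r i ∈ S :=
  B_min_axis_above_general r R m hrR S hSB hcard t ht i hi1 hir hmin
end
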